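/- arXiv:1603.01288 — 6 statements merged into one kernel-verified Lean document; each statement's English description precedes it below -/
import Mathlib

section
/- Let X be an order complete vector lattice with the countable sup property and Y a sublattice of X. Then Y is order closed in X if and only if for every increasing sequence in Y that is order bounded above in X, its supremum (taken in X) belongs to Y. -/
open Filter

universe u

/-- Order convergence of a net in a vector lattice: there is a net decreasing to `0`
(antitone with infimum `0`) eventually dominating `|y α - x|`. -/
def OrderConvNet {X : Type u} [Lattice X] [AddCommGroup X] {ι : Type*} [Preorder ι]
    (y : ι → X) (x : X) : Prop :=
  ∃ z : ι → X, Antitone z ∧ IsGLB (Set.range z) 0 ∧ ∀ᶠ a in atTop, |y a - x| ≤ z a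

/-- A subset is order closed if it contains the order limit of every net of its elements. -/
def OrderClosedSet {X : Type u} [Lattice X] [AddCommGroup X] (A : Set X) : Prop :=
  ∀ (ι : Type u) (_ : Preorder ι) (_ : IsDirected ι (· ≤ ·)) (_ : Nonempty ι)
    (y : ι → X) (x : X), (∀ a, y a ∈ A) → OrderConvNet y x → x ∈ A

/-!
If `w n ∈ Y` and `|w n - x| ≤ v n` with `v` decreasing to `0`, then `x` is the infimum of the
decreasing tail suprema `r n = sup_{k ≥ n} w k`, which exist by order completeness. Each `r n` is
the supremum of the increasing partial suprema of a tail of `w`, so it lies in `Y`; negating the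
`r n` then puts `x` in `Y`. An order-convergent net reduces to this case by the countable sup
property: countably many values of the dominating net already have infimum `0`, and so do its
values along a monotone sequence of indices above them.
-/

open Set

section SeqSup

variable {X : Type*}

def MonotoneSeqSupClosed [Preorder X] (Y : Set X) : Prop :=
  ∀ y : ℕ → X, (∀ n, y n ∈ Y) → Monotone y → BddAbove (range y) →
    ∀ x : X, IsLUB (range y) x → x ∈ Y

theorem SupClosed.partialSups_mem [SemilatticeSup X] {Y : Set X} (hY : SupClosed Y)
    {ι : Type*} [Preorder ι] [LocallyFiniteOrderBot ι] {u : ι → X} (hu : ∀ i, u i ∈ Y) (i : ι) :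
    partialSups u i ∈ Y :=
  hY.finsetSup'_mem Finset.nonempty_Iic fun j _ => hu j

theorem MonotoneSeqSupClosed.isLUB_mem [SemilatticeSup X] {Y : Set X}
    (hY : MonotoneSeqSupClosed Y) (hsup : SupClosed Y) {S : Set X} (hSY : S ⊆ Y)
    (hS : S.Countable) (hne : S.Nonempty) {x : X} (hx : IsLUB S x) : x ∈ Y := by
  obtain ⟨u, rfl⟩ := hS.exists_eq_range hne
  have hx' : IsLUB (range (partialSups u)) x := by rwa [IsLUB, upperBounds_range_partialSups]
  exact hY _ (hsup.partialSups_mem fun n => hSY ⟨n, rfl⟩) (partialSups_monotone u)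
    hx'.bddAbove x hx'

end SeqSup

section LatticeOrderedGroup

variable {X : Type*} [Lattice X] [AddCommGroup X] [IsOrderedAddMonoid X]

theorem MonotoneSeqSupClosed.isGLB_mem_of_antitone {Y : Set X} (hY : MonotoneSeqSupClosed Y)
    (hneg : ∀ y ∈ Y, -y ∈ Y) {r : ℕ → X} (hr : ∀ n, r n ∈ Y) (hanti : Antitone r) {x : X}
    (hx : IsGLB (range r) x) : x ∈ Y := by
  have hx' : IsLUB (range fun n => -r n) (-x) := by rw [← neg_range]; exact hx.neg
  simpa using hneg _ (hY _ (fun n => hneg _ (hr n)) (fun m n h => neg_le_neg (hanti h))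
    hx'.bddAbove _ hx')

theorem MonotoneSeqSupClosed.mem_of_abs_sub_le
    (hoc : ∀ S : Set X, S.Nonempty → BddAbove S → ∃ x, IsLUB S x)
    {Y : Set X} (hY : MonotoneSeqSupClosed Y) (hsup : SupClosed Y) (hneg : ∀ y ∈ Y, -y ∈ Y)
    {x : X} {w v : ℕ → X} (hw : ∀ n, w n ∈ Y) (hv : Antitone v) (hv0 : IsGLB (range v) 0)
    (hwx : ∀ n, |w n - x| ≤ v n) : x ∈ Y := by
  have hw_le : ∀ n, w n ≤ x + v n := fun n => sub_le_iff_le_add'.1 (abs_le'.1 (hwx n)).1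
  have hw_ge : ∀ n, x - v n ≤ w n := fun n => sub_le_comm.1 (by simpa using (abs_le'.1 (hwx n)).2)
  have hbdd : ∀ n, x + v n ∈ upperBounds (w '' Ici n) := by
    rintro n _ ⟨k, hk, rfl⟩
    exact (hw_le k).trans (add_le_add_right (hv hk) x)
  choose r hr using fun n => hoc (w '' Ici n) ⟨w n, mem_image_of_mem w self_mem_Ici⟩ ⟨_, hbdd n⟩
  have hrY : ∀ n, r n ∈ Y := fun n => hY.isLUB_mem hsup (image_subset_iff.2 fun k _ => hw k)
    ((Ici n).to_countable.image w) ⟨w n, mem_image_of_mem w self_mem_Ici⟩ (hr n)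
  have hr_anti : Antitone r := fun m n hmn =>
    (hr n).mono (hr m) (image_mono (Ici_subset_Ici.2 hmn))
  have hle_zero : ∀ b, (∀ n, b ≤ v n) → b ≤ 0 := fun b hb =>
    hv0.2 (by rintro _ ⟨n, rfl⟩; exact hb n)
  refine hY.isGLB_mem_of_antitone hneg hrY hr_anti ⟨?_, fun b hb => ?_⟩
  · rintro _ ⟨n, rfl⟩
    refine sub_nonpos.1 (hle_zero _ fun k => ?_)
    have : x - v (max n k) ≤ r n := (hw_ge _).trans ((hr n).1 ⟨_, le_max_left n k, rfl⟩)
    exact (sub_le_comm.1 this).trans (hv (le_max_right n k))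
  · refine sub_nonpos.1 (hle_zero _ fun n => ?_)
    exact sub_le_iff_le_add'.2 ((hb ⟨n, rfl⟩).trans ((hr n).2 (hbdd n)))

end LatticeOrderedGroup

theorem exists_monotone_seq_ge {ι : Type*} [Preorder ι] [IsDirectedOrder ι] (a : ι) (α : ℕ → ι) :
    ∃ β : ℕ → ι, Monotone β ∧ a ≤ β 0 ∧ ∀ n, α n ≤ β n := by
  choose g hg₁ hg₂ using fun b c : ι => exists_ge_ge b c
  let β : ℕ → ι := fun n => Nat.rec (g a (α 0)) (fun n b => g b (α (n + 1))) n
  exact ⟨β, monotone_nat_of_le_succ fun n => hg₁ _ _, hg₁ _ _,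
    fun n => by cases n <;> exact hg₂ _ _⟩

section CountableSup

variable {X : Type*}

theorem exists_nat_isGLB_range [SemilatticeInf X]
    (hcip : ∀ (S : Set X) (x : X), IsGLB S x → ∃ T ⊆ S, T.Countable ∧ IsGLB T x)
    {ι : Type*} [Nonempty ι] {f : ι → X} {a : X} (h : IsGLB (range f) a) :
    ∃ α : ℕ → ι, IsGLB (range (f ∘ α)) a := by
  obtain ⟨T, hTf, hT, hTa⟩ := hcip _ _ h
  obtain i₀ : ι := Classical.arbitrary ι
  -- `T` may be empty; adding one value of `f` keeps the infimum and makes it a range.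
  have hT' : IsGLB (insert (f i₀) T) a := by
    simpa [inf_eq_right.2 (h.1 ⟨i₀, rfl⟩)] using hTa.insert (f i₀)
  obtain ⟨u, hu⟩ := (hT.insert (f i₀)).exists_eq_range (insert_nonempty _ _)
  have hu_sub : range u ⊆ range f := hu ▸ insert_subset ⟨i₀, rfl⟩ hTf
  choose α hα using fun n => hu_sub (mem_range_self n)
  exact ⟨α, by rwa [show f ∘ α = u from funext hα, ← hu]⟩

variable [Lattice X] [AddCommGroup X] [IsOrderedAddMonoid X]

theorem exists_countable_subset_isGLB
    (hcsp : ∀ (S : Set X) (x : X), IsLUB S x → ∃ T ⊆ S, T.Countable ∧ IsLUB T x)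
    {S : Set X} {x : X} (h : IsGLB S x) : ∃ T ⊆ S, T.Countable ∧ IsGLB T x := by
  obtain ⟨T, hTS, hT, hTx⟩ := hcsp _ _ h.neg
  refine ⟨-T, neg_subset.2 hTS, ?_, by simpa using hTx.neg⟩
  simpa [image_neg_eq_neg] using hT.image (- ·)

theorem OrderConvNet.exists_nat_subseq
    (hcsp : ∀ (S : Set X) (x : X), IsLUB S x → ∃ T ⊆ S, T.Countable ∧ IsLUB T x)
    {ι : Type*} [Preorder ι] [IsDirectedOrder ι] [Nonempty ι] {y : ι → X} {x : X}
    (h : OrderConvNet y x) :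
    ∃ β : ℕ → ι, ∃ v : ℕ → X, Antitone v ∧ IsGLB (range v) 0 ∧ ∀ n, |y (β n) - x| ≤ v n := by
  obtain ⟨z, hz, hz0, hyz⟩ := h
  obtain ⟨a, ha⟩ := Filter.eventually_atTop.1 hyz
  obtain ⟨α, hα⟩ := exists_nat_isGLB_range (fun _ _ => exists_countable_subset_isGLB hcsp) hz0
  obtain ⟨β, hβ, haβ, hαβ⟩ := exists_monotone_seq_ge a α
  refine ⟨β, z ∘ β, hz.comp_monotone hβ, ⟨?_, fun b hb => hα.2 ?_⟩,
    fun n => ha _ (haβ.trans (hβ n.zero_le))⟩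
  · rintro _ ⟨n, rfl⟩
    exact hz0.1 ⟨β n, rfl⟩
  · rintro _ ⟨n, rfl⟩
    exact (hb ⟨n, rfl⟩).trans (hz (hαβ n))

end CountableSup

theorem Monotone.orderConvNet_of_isLUB {X : Type*} [Lattice X] [AddCommGroup X]
    [IsOrderedAddMonoid X] {ι : Type*} [Preorder ι] {y : ι → X} (hy : Monotone y) {x : X}
    (hx : IsLUB (range y) x) : OrderConvNet y x := by
  have hyx : ∀ i, y i ≤ x := fun i => hx.1 ⟨i, rfl⟩
  refine ⟨fun i => x - y i, fun i j h => sub_le_sub_left (hy h) x, ⟨?_, fun b hb => ?_⟩,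
    Filter.Eventually.of_forall fun i => ?_⟩
  · rintro _ ⟨i, rfl⟩
    exact sub_nonneg.2 (hyx i)
  · refine (le_sub_self_iff x).1 (hx.2 ?_)
    rintro _ ⟨i, rfl⟩
    exact le_sub_comm.1 (hb ⟨i, rfl⟩)
  · rw [abs_sub_comm, abs_of_nonneg (sub_nonneg.2 (hyx i))]

theorem Submodule.supClosed_of_abs_mem {𝕜 X : Type*} [DivisionRing 𝕜] [NeZero (2 : 𝕜)]
    [Lattice X] [AddCommGroup X] [IsOrderedAddMonoid X] [Module 𝕜 X] (Y : Submodule 𝕜 X)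
    (hY : ∀ y ∈ Y, |y| ∈ Y) : SupClosed (Y : Set X) := fun a ha b hb => by
  rw [SetLike.mem_coe, sup_eq_half_smul_add_add_abs_sub' 𝕜]
  exact Y.smul_mem _ (Y.add_mem (Y.add_mem ha hb) (hY _ (Y.sub_mem hb ha)))

/-- For a sublattice `Y` of an order complete vector lattice `X` with the
countable sup property, `Y` is order closed in `X` iff the supremum (in `X`) of every
increasing sequence in `Y` which is order bounded above in `X` belongs to `Y`. -/
theorem orderClosed_iff_sup_of_increasing_seq
    {X : Type u} [Lattice X] [AddCommGroup X] [Module ℝ X]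
    [CovariantClass X X (· + ·) (· ≤ ·)]
    (hoc : ∀ S : Set X, S.Nonempty → BddAbove S → ∃ x, IsLUB S x)
    (hcsp : ∀ (S : Set X) (x : X), IsLUB S x → ∃ T ⊆ S, T.Countable ∧ IsLUB T x)
    (Y : Submodule ℝ X) (hsub : ∀ y ∈ Y, |y| ∈ Y) :
    OrderClosedSet (Y : Set X) ↔
      ∀ y : ℕ → X, (∀ n, y n ∈ Y) → Monotone y → BddAbove (Set.range y) →
        ∀ x : X, IsLUB (Set.range y) x → x ∈ Y := by
  have : IsOrderedAddMonoid X := { add_le_add_left := fun _ _ h c => add_le_add_left h c }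
  refine ⟨fun hY y hyY hy _ x hx => ?_, fun hY ι _ _ _ y x hyY hyx => ?_⟩
  · have hy' : Monotone (y ∘ ULift.down.{u}) := fun _ _ h => hy h
    refine hY (ULift ℕ) inferInstance inferInstance inferInstance (y ∘ ULift.down) x
      (fun n => hyY n.down) (hy'.orderConvNet_of_isLUB ?_)
    rwa [ULift.down_surjective.range_comp]
  · obtain ⟨β, v, hv, hv0, hyv⟩ := hyx.exists_nat_subseq hcsp
    exact MonotoneSeqSupClosed.mem_of_abs_sub_le hoc hY (Y.supClosed_of_abs_mem hsub)
      (fun _ => Y.neg_mem) (fun n => hyY (β n)) hv hv0 hyv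
end

section
/- Let X be an ideal of L⁰(Ω, Σ, ℙ) and Y an order closed sublattice of X containing the constant function 1. Then G := {A ∈ Σ : χ_A ∈ Y} is a σ-algebra (containing all ℙ-null sets, where χ_A is identified with 0 when ℙ(A) = 0). -/
open MeasureTheory Filter

universe u

variable {Ω : Type u}

/-- An ideal (solid subspace) of `L⁰`. -/
def IsIdealL0 {m0 : MeasurableSpace Ω} {μ : Measure Ω} (X : Submodule ℝ (Ω →ₘ[μ] ℝ)) : Prop :=
  ∀ x y : Ω →ₘ[μ] ℝ, |x| ≤ |y| → y ∈ X → x ∈ X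

/-- Order convergence of a net `y` to `x` within the subspace `X` of `L⁰`: there is a net
`z` in `X`, antitone, with infimum `0` relative to `X`, eventually dominating `|y a - x|`. -/
def OrderConvNetIn {m0 : MeasurableSpace Ω} {μ : Measure Ω} (X : Submodule ℝ (Ω →ₘ[μ] ℝ))
    {ι : Type*} [Preorder ι] (y : ι → (Ω →ₘ[μ] ℝ)) (x : Ω →ₘ[μ] ℝ) : Prop :=
  ∃ z : ι → (Ω →ₘ[μ] ℝ), (∀ a, z a ∈ X) ∧ Antitone z ∧ (∀ a, 0 ≤ z a) ∧
    (∀ h ∈ X, (∀ a, h ≤ z a) → h ≤ 0) ∧ ∀ᶠ a in atTop, |y a - x| ≤ z a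

/-- A subset `Y` of `X ⊆ L⁰` is order closed in `X` if it contains the limit of any net of
its elements order-converging (within `X`) to an element of `X`. -/
def OrderClosedIn {m0 : MeasurableSpace Ω} {μ : Measure Ω} (X : Submodule ℝ (Ω →ₘ[μ] ℝ))
    (Y : Set (Ω →ₘ[μ] ℝ)) : Prop :=
  ∀ (ι : Type u) (_ : Preorder ι) (_ : IsDirected ι (· ≤ ·)) (_ : Nonempty ι)
    (y : ι → (Ω →ₘ[μ] ℝ)) (x : Ω →ₘ[μ] ℝ),
    (∀ a, y a ∈ Y) → x ∈ X → OrderConvNetIn X y x → x ∈ Y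

/-- The indicator of a measurable set, as an element of `L⁰`. -/
noncomputable def chiL0 {m0 : MeasurableSpace Ω} (μ : Measure Ω) (A : Set Ω)
    (hA : MeasurableSet A) : Ω →ₘ[μ] ℝ :=
  AEEqFun.mk (A.indicator fun _ => (1 : ℝ))
    ((measurable_const.indicator hA).aestronglyMeasurable)

/-!
Complements and finite unions stay in `G` because `χ_{Aᶜ} = 1 - χ_A` and `χ_{A ∪ B} = χ_A ⊔ χ_B`,
and null sets lie in `G` because their indicators vanish in `L⁰`. For a countable union `⋃ sₙ`,
the indicators of the partial unions `Bₙ = s₀ ∪ ⋯ ∪ sₙ` lie in `Y` and increase to `χ_{⋃ sₙ}`;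
the differences `χ_{⋃ sₙ} - χ_{Bₙ}` decrease to `0` almost everywhere, so they witness order
convergence in `X`, and order closedness of `Y` gives `χ_{⋃ sₙ} ∈ Y`.
-/

namespace MeasureTheory.AEEqFun

instance {m0 : MeasurableSpace Ω} {μ : Measure Ω} {β : Type*} [TopologicalSpace β]
    [AddCommMonoid β] [PartialOrder β] [IsOrderedAddMonoid β] [ContinuousAdd β] :
    IsOrderedAddMonoid (Ω →ₘ[μ] β) where
  add_le_add_left a b h c := by
    rw [← coeFn_le] at h ⊢
    filter_upwards [h, coeFn_add a c, coeFn_add b c] with ω hab hac hbc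
    rw [hac, hbc]
    exact add_le_add_left hab _

end MeasureTheory.AEEqFun

section Indicator

variable {m0 : MeasurableSpace Ω} {μ : Measure Ω}

lemma chiL0_coeFn {A : Set Ω} (hA : MeasurableSet A) :
    ⇑(chiL0 μ A hA) =ᵐ[μ] A.indicator (fun _ => (1 : ℝ)) :=
  AEEqFun.coeFn_mk _ _

lemma chiL0_mono {A B : Set Ω} (hA : MeasurableSet A) (hB : MeasurableSet B) (hAB : A ⊆ B) :
    chiL0 μ A hA ≤ chiL0 μ B hB :=
  (AEEqFun.mk_le_mk _ _).2 <| Eventually.of_forall <|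
    Set.indicator_le_indicator_of_subset hAB fun _ => zero_le_one

lemma chiL0_nonneg {A : Set Ω} (hA : MeasurableSet A) : 0 ≤ chiL0 μ A hA := by
  rw [AEEqFun.zero_def, chiL0, AEEqFun.mk_le_mk]
  exact Eventually.of_forall <| Set.indicator_nonneg fun _ _ => zero_le_one

lemma chiL0_le_one {A : Set Ω} (hA : MeasurableSet A) : chiL0 μ A hA ≤ 1 := by
  rw [AEEqFun.one_def, chiL0, AEEqFun.mk_le_mk]
  exact Eventually.of_forall <| Set.indicator_le_self' fun _ _ => zero_le_one

lemma abs_chiL0_le_abs_one {A : Set Ω} (hA : MeasurableSet A) :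
    |chiL0 μ A hA| ≤ |(1 : Ω →ₘ[μ] ℝ)| := by
  rw [abs_of_nonneg (chiL0_nonneg hA), abs_of_nonneg ((chiL0_nonneg hA).trans (chiL0_le_one hA))]
  exact chiL0_le_one hA

lemma chiL0_compl {A : Set Ω} (hA : MeasurableSet A) :
    chiL0 μ Aᶜ hA.compl = 1 - chiL0 μ A hA := by
  rw [AEEqFun.one_def, chiL0, chiL0, ← AEEqFun.mk_sub]
  congr 1
  exact Set.indicator_compl _ _

lemma chiL0_union {A B : Set Ω} (hA : MeasurableSet A) (hB : MeasurableSet B) :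
    chiL0 μ (A ∪ B) (hA.union hB) = chiL0 μ A hA ⊔ chiL0 μ B hB := by
  refine AEEqFun.ext ?_
  filter_upwards [chiL0_coeFn (hA.union hB), AEEqFun.coeFn_sup (chiL0 μ A hA) (chiL0 μ B hB),
    chiL0_coeFn hA, chiL0_coeFn hB] with ω hAB hsup hA hB
  rw [hAB, hsup, hA, hB]
  by_cases hωA : ω ∈ A <;> by_cases hωB : ω ∈ B <;> simp [hωA, hωB]

lemma chiL0_of_measure_zero {A : Set Ω} (hA : MeasurableSet A) (h0 : μ A = 0) :
    chiL0 μ A hA = 0 := by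
  rw [AEEqFun.zero_def, chiL0, AEEqFun.mk_eq_mk]
  filter_upwards [measure_eq_zero_iff_ae_notMem.1 h0] with ω hω
  exact Set.indicator_of_notMem hω _

end Indicator

section OrderConvergence

variable {m0 : MeasurableSpace Ω} {μ : Measure Ω} {X : Submodule ℝ (Ω →ₘ[μ] ℝ)}

lemma OrderClosedIn.mem_of_orderConvNetIn_nat {Y : Set (Ω →ₘ[μ] ℝ)} (hY : OrderClosedIn X Y)
    {y : ℕ → Ω →ₘ[μ] ℝ} {x : Ω →ₘ[μ] ℝ} (hyY : ∀ n, y n ∈ Y) (hxX : x ∈ X)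
    (hyx : OrderConvNetIn X y x) : x ∈ Y := by
  obtain ⟨z, hzX, hz_anti, hz_nonneg, hz_inf, hz_dom⟩ := hyx
  let e : ULift.{u} ℕ ≃o ℕ := ULift.orderIso
  have hyx' : OrderConvNetIn X (y ∘ e) x :=
    ⟨z ∘ e, fun a => hzX (e a), hz_anti.comp_monotone e.monotone, fun a => hz_nonneg (e a),
      fun h hhX hh => hz_inf h hhX fun n => by simpa using hh (e.symm n),
      e.tendsto_atTop.eventually hz_dom⟩
  exact hY (ULift.{u} ℕ) inferInstance inferInstance ⟨⟨0⟩⟩ (y ∘ e) x (fun a => hyY (e a)) hxX hyx'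

lemma IsIdealL0.chiL0_mem (hX : IsIdealL0 X) (h1X : (1 : Ω →ₘ[μ] ℝ) ∈ X) {A : Set Ω}
    (hA : MeasurableSet A) : chiL0 μ A hA ∈ X :=
  hX _ 1 (abs_chiL0_le_abs_one hA) h1X

lemma le_zero_of_forall_le_chiL0_iUnion_sub {s : ℕ → Set Ω} (hs : Monotone s)
    (hm : ∀ n, MeasurableSet (s n)) {h : Ω →ₘ[μ] ℝ}
    (hh : ∀ n, h ≤ chiL0 μ (⋃ n, s n) (.iUnion hm) - chiL0 μ (s n) (hm n)) : h ≤ 0 := by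
  have hh_ae : ∀ᵐ ω ∂μ, ∀ n, h ω ≤
      (⋃ n, s n).indicator (fun _ => (1 : ℝ)) ω - (s n).indicator (fun _ => 1) ω := by
    rw [ae_all_iff]
    intro n
    filter_upwards [AEEqFun.coeFn_le.2 (hh n), AEEqFun.coeFn_sub (chiL0 μ _ (.iUnion hm)) _,
      chiL0_coeFn (.iUnion hm), chiL0_coeFn (hm n)] with ω hω hsub hU hsn
    rwa [hsub, Pi.sub_apply, hU, hsn] at hω
  rw [← AEEqFun.coeFn_le]
  filter_upwards [hh_ae, AEEqFun.coeFn_zero (β := ℝ) (μ := μ)] with ω hω h0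
  -- the indicators of `s n` at `ω` are eventually equal to that of `⋃ n, s n`
  obtain ⟨n, hn⟩ := (tendsto_pure.1 (Monotone.tendsto_indicator s hs (fun _ => (1 : ℝ)) ω)).exists
  simpa [h0, hn] using hω n

lemma orderConvNetIn_chiL0_iUnion (hX : IsIdealL0 X) (h1X : (1 : Ω →ₘ[μ] ℝ) ∈ X)
    {s : ℕ → Set Ω} (hs : Monotone s) (hm : ∀ n, MeasurableSet (s n)) :
    OrderConvNetIn X (fun n => chiL0 μ (s n) (hm n)) (chiL0 μ (⋃ n, s n) (.iUnion hm)) := by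
  have hle : ∀ n, chiL0 μ (s n) (hm n) ≤ chiL0 μ (⋃ n, s n) (.iUnion hm) := fun n =>
    chiL0_mono _ _ (Set.subset_iUnion s n)
  refine ⟨fun n => chiL0 μ (⋃ n, s n) (.iUnion hm) - chiL0 μ (s n) (hm n),
    fun n => X.sub_mem (hX.chiL0_mem h1X _) (hX.chiL0_mem h1X _),
    fun m n hmn => sub_le_sub_left (chiL0_mono _ _ (hs hmn)) _,
    fun n => sub_nonneg.2 (hle n), fun h _ hh => le_zero_of_forall_le_chiL0_iUnion_sub hs hm hh,
    Eventually.of_forall fun n => ?_⟩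
  rw [abs_sub_comm, abs_of_nonneg (sub_nonneg.2 (hle n))]

end OrderConvergence

lemma Submodule.sup_mem_of_abs_mem {𝕜 M : Type*} [DivisionRing 𝕜] [NeZero (2 : 𝕜)] [Lattice M]
    [AddCommGroup M] [Module 𝕜 M] [IsOrderedAddMonoid M] {Y : Submodule 𝕜 M}
    (hY : ∀ y ∈ Y, |y| ∈ Y) {a b : M} (ha : a ∈ Y) (hb : b ∈ Y) : a ⊔ b ∈ Y := by
  rw [sup_eq_half_smul_add_add_abs_sub' 𝕜 a b]
  exact Y.smul_mem _ (Y.add_mem (Y.add_mem ha hb) (hY _ (Y.sub_mem hb ha)))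

def indicatorSets {m0 : MeasurableSpace Ω} (μ : Measure Ω) (Y : Set (Ω →ₘ[μ] ℝ)) :
    Set (Set Ω) :=
  {A | ∃ h : MeasurableSet A, chiL0 μ A h ∈ Y}

section IndicatorSets

variable {m0 : MeasurableSpace Ω} {μ : Measure Ω} {Y : Submodule ℝ (Ω →ₘ[μ] ℝ)}

lemma mem_indicatorSets_of_measure_zero {A : Set Ω} (hA : MeasurableSet A) (h0 : μ A = 0) :
    A ∈ indicatorSets μ Y :=
  ⟨hA, by rw [chiL0_of_measure_zero hA h0]; exact Y.zero_mem⟩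

lemma compl_mem_indicatorSets (h1 : (1 : Ω →ₘ[μ] ℝ) ∈ Y) {A : Set Ω}
    (hA : A ∈ indicatorSets μ Y) : Aᶜ ∈ indicatorSets μ Y := by
  obtain ⟨hAm, hAY⟩ := hA
  exact ⟨hAm.compl, by rw [chiL0_compl hAm]; exact Y.sub_mem h1 hAY⟩

lemma union_mem_indicatorSets (hsub : ∀ y ∈ Y, |y| ∈ Y) {A B : Set Ω}
    (hA : A ∈ indicatorSets μ Y) (hB : B ∈ indicatorSets μ Y) : A ∪ B ∈ indicatorSets μ Y := by
  obtain ⟨hAm, hAY⟩ := hA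
  obtain ⟨hBm, hBY⟩ := hB
  exact ⟨hAm.union hBm, by rw [chiL0_union hAm hBm]; exact Y.sup_mem_of_abs_mem hsub hAY hBY⟩

lemma accumulate_mem_indicatorSets (hsub : ∀ y ∈ Y, |y| ∈ Y) {s : ℕ → Set Ω}
    (hs : ∀ n, s n ∈ indicatorSets μ Y) (n : ℕ) : Set.accumulate s n ∈ indicatorSets μ Y := by
  induction n with
  | zero => simpa [Set.accumulate_zero_nat] using hs 0
  | succ n ih => simpa [Set.accumulate_succ] using union_mem_indicatorSets hsub ih (hs (n + 1))

lemma iUnion_mem_indicatorSets {X : Submodule ℝ (Ω →ₘ[μ] ℝ)} (hX : IsIdealL0 X)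
    (h1X : (1 : Ω →ₘ[μ] ℝ) ∈ X) (hsub : ∀ y ∈ Y, |y| ∈ Y)
    (hclosed : OrderClosedIn X (Y : Set (Ω →ₘ[μ] ℝ))) {s : ℕ → Set Ω}
    (hs : ∀ n, s n ∈ indicatorSets μ Y) : ⋃ n, s n ∈ indicatorSets μ Y := by
  rw [← Set.iUnion_accumulate]
  choose hm hmY using accumulate_mem_indicatorSets hsub hs
  exact ⟨_, hclosed.mem_of_orderConvNetIn_nat hmY (hX.chiL0_mem h1X _)
    (orderConvNetIn_chiL0_iUnion hX h1X Set.monotone_accumulate hm)⟩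

end IndicatorSets

theorem indicator_sets_sigmaAlgebra_general
    {m0 : MeasurableSpace Ω} {μ : Measure Ω}
    (X : Submodule ℝ (Ω →ₘ[μ] ℝ)) (hX : IsIdealL0 X)
    (Y : Submodule ℝ (Ω →ₘ[μ] ℝ)) (hYX : (Y : Set (Ω →ₘ[μ] ℝ)) ⊆ X)
    (hsub : ∀ y ∈ Y, |y| ∈ Y) (h1 : (1 : Ω →ₘ[μ] ℝ) ∈ Y)
    (hclosed : OrderClosedIn X (Y : Set (Ω →ₘ[μ] ℝ))) :
    (∃ h : MeasurableSet (∅ : Set Ω), chiL0 μ ∅ h ∈ Y) ∧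
    (∀ A : Set Ω, (∃ h : MeasurableSet A, chiL0 μ A h ∈ Y) →
      ∃ h : MeasurableSet Aᶜ, chiL0 μ Aᶜ h ∈ Y) ∧
    (∀ s : ℕ → Set Ω, (∀ n, ∃ h : MeasurableSet (s n), chiL0 μ (s n) h ∈ Y) →
      ∃ h : MeasurableSet (⋃ n, s n), chiL0 μ (⋃ n, s n) h ∈ Y) ∧
    (∀ A : Set Ω, MeasurableSet A → μ A = 0 →
      ∃ h : MeasurableSet A, chiL0 μ A h ∈ Y) :=
  ⟨mem_indicatorSets_of_measure_zero .empty measure_empty,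
    fun _ => compl_mem_indicatorSets h1,
    fun _ => iUnion_mem_indicatorSets hX (hYX h1) hsub hclosed,
    fun _ => mem_indicatorSets_of_measure_zero⟩

/-- If `Y` is an order closed sublattice of an ideal `X` of `L⁰` with `1 ∈ Y`,
then `G = {A ∈ Σ : χ_A ∈ Y}` is a σ-algebra containing all null sets. -/
theorem indicator_sets_sigmaAlgebra
    {m0 : MeasurableSpace Ω} {μ : Measure Ω} [IsProbabilityMeasure μ]
    (X : Submodule ℝ (Ω →ₘ[μ] ℝ)) (hX : IsIdealL0 X)
    (Y : Submodule ℝ (Ω →ₘ[μ] ℝ)) (hYX : (Y : Set (Ω →ₘ[μ] ℝ)) ⊆ X)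
    (hsub : ∀ y ∈ Y, |y| ∈ Y) (h1 : (1 : Ω →ₘ[μ] ℝ) ∈ Y)
    (hclosed : OrderClosedIn X (Y : Set (Ω →ₘ[μ] ℝ))) :
    (∃ h : MeasurableSet (∅ : Set Ω), chiL0 μ ∅ h ∈ Y) ∧
    (∀ A : Set Ω, (∃ h : MeasurableSet A, chiL0 μ A h ∈ Y) →
      ∃ h : MeasurableSet Aᶜ, chiL0 μ Aᶜ h ∈ Y) ∧
    (∀ s : ℕ → Set Ω, (∀ n, ∃ h : MeasurableSet (s n), chiL0 μ (s n) h ∈ Y) →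
      ∃ h : MeasurableSet (⋃ n, s n), chiL0 μ (⋃ n, s n) h ∈ Y) ∧
    (∀ A : Set Ω, MeasurableSet A → μ A = 0 →
      ∃ h : MeasurableSet A, chiL0 μ A h ∈ Y) :=
  indicator_sets_sigmaAlgebra_general (m0 := m0) X hX Y hYX hsub h1 hclosed
end

section
/- Let X be an ideal of L⁰(Ω, Σ, ℙ) containing the constants and let f ∈ X with f ≥ 0. Then the option space O_f = span{1, (f − k)⁺ : k ∈ ℝ} is a sublattice of X, and coincides with span{f + 1, f, (f − k(f+1))⁺ : k ∈ ℝ}. -/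
open MeasureTheory Filter

universe u

variable {Ω : Type u}

/-- The option space `O_f = span{1, (f-k)⁺ : k ∈ ℝ}` of a claim `f ∈ L⁰`. -/
def optionSpace {m0 : MeasurableSpace Ω} {μ : Measure Ω} (f : Ω →ₘ[μ] ℝ) :
    Submodule ℝ (Ω →ₘ[μ] ℝ) :=
  Submodule.span ℝ ({1} ∪ {g | ∃ k : ℝ, g = (f - k • (1 : Ω →ₘ[μ] ℝ)) ⊔ 0})

/-!
Every element of `O_f` is `φ ∘ f` for some `φ` in the span `R` of `1` and the ramps `(x - k)⁺`
in `C(ℝ, ℝ)`, and `φ ↦ φ ∘ f` is linear and commutes with `⊔`; so `O_f` is a sublattice as soon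
as `R` is closed under `φ ↦ φ⁺`. Write `φ = c + ∑ aₖ (x - k)⁺` and induct on the largest kink `m`:
the remaining part `ψ` is affine on `[m, ∞)`, so `φ⁺ - ψ⁺` is a difference of positive parts of
one-kink functions `v + s (x - m)⁺`, and these are explicit combinations of `1` and ramps.

For the second description of `O_f`: since `f ≥ 0`, `φ ∘ f` only depends on `φ` on `[0, ∞)`,
and there each generator `1, (x - k)⁺` is a combination of `x + 1, x, (x - k (x + 1))⁺` and
conversely, by rescaling the strike.
-/

open Set

@[simp] lemma ContinuousMap.posPart_apply {α β : Type*} [TopologicalSpace α] [TopologicalSpace β]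
    [Lattice β] [TopologicalLattice β] [AddGroup β] [IsTopologicalAddGroup β]
    (φ : C(α, β)) (x : α) : φ⁺ x = (φ x)⁺ := rfl

noncomputable def ramp (k : ℝ) : C(ℝ, ℝ) := (ContinuousMap.id ℝ - k • 1)⁺

@[simp] lemma ramp_apply (k x : ℝ) : ramp k x = max (x - k) 0 := by
  simp [ramp, posPart_def]

lemma ramp_apply_of_le {k x : ℝ} (h : x ≤ k) : ramp k x = 0 := by
  simp [h]

lemma ramp_apply_of_ge {k x : ℝ} (h : k ≤ x) : ramp k x = x - k := by
  simp [h]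

noncomputable def rampSpan : Submodule ℝ C(ℝ, ℝ) :=
  Submodule.span ℝ ({1} ∪ range ramp)

lemma one_mem_rampSpan : (1 : C(ℝ, ℝ)) ∈ rampSpan :=
  Submodule.subset_span (Or.inl rfl)

lemma ramp_mem_rampSpan (k : ℝ) : ramp k ∈ rampSpan :=
  Submodule.subset_span (Or.inr ⟨k, rfl⟩)

lemma exists_eq_smul_one_add_sum_of_mem_rampSpan {φ : C(ℝ, ℝ)} (hφ : φ ∈ rampSpan) :
    ∃ (c : ℝ) (S : Finset ℝ) (a : ℝ → ℝ), φ = c • 1 + ∑ k ∈ S, a k • ramp k := by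
  rw [rampSpan, Submodule.span_union, Submodule.mem_sup] at hφ
  obtain ⟨y, hy, z, hz, rfl⟩ := hφ
  obtain ⟨c, rfl⟩ := Submodule.mem_span_singleton.1 hy
  obtain ⟨a, rfl⟩ := Finsupp.mem_span_range_iff_exists_finsupp.1 hz
  exact ⟨c, a.support, a, rfl⟩

lemma sum_smul_ramp_apply_of_le {S : Finset ℝ} (a : ℝ → ℝ) {m x : ℝ} (hS : ∀ k ∈ S, k ≤ m)
    (hx : m ≤ x) :
    (∑ k ∈ S, a k • ramp k) x = (∑ k ∈ S, a k • ramp k) m + (∑ k ∈ S, a k) * (x - m) := by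
  simp only [ContinuousMap.sum_apply, ContinuousMap.smul_apply, smul_eq_mul, Finset.sum_mul,
    ← Finset.sum_add_distrib]
  refine Finset.sum_congr rfl fun k hk => ?_
  rw [ramp_apply_of_ge (hS k hk), ramp_apply_of_ge ((hS k hk).trans hx)]
  ring

lemma posPart_smul_one_add_smul_ramp_mem_rampSpan (v s m : ℝ) :
    (v • 1 + s • ramp m)⁺ ∈ rampSpan := by
  wlog hs : 0 ≤ s generalizing v s
  · -- `g⁺ = g + (-g)⁺` trades the slope `s` for `-s`
    have h := this (-v) (-s) (by linarith)
    rw [sub_eq_iff_eq_add.1 (posPart_sub_negPart (v • 1 + s • ramp m)), ← posPart_neg]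
    refine Submodule.add_mem _ (Submodule.add_mem _ (Submodule.smul_mem _ _ one_mem_rampSpan)
      (Submodule.smul_mem _ _ (ramp_mem_rampSpan m))) ?_
    convert h using 2
    module
  rcases le_or_gt 0 v with hv | hv
  · rw [posPart_eq_self.2]
    · exact Submodule.add_mem _ (Submodule.smul_mem _ _ one_mem_rampSpan)
        (Submodule.smul_mem _ _ (ramp_mem_rampSpan m))
    · refine ContinuousMap.le_def.2 fun x => ?_
      simp only [ContinuousMap.zero_apply, ContinuousMap.add_apply, ContinuousMap.smul_apply,
        ContinuousMap.one_apply, smul_eq_mul, ramp_apply]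
      positivity
  -- `v + s (x - m)⁺` changes sign at `m - v / s`
  convert Submodule.smul_mem _ s (ramp_mem_rampSpan (m - v / s)) using 1
  ext x
  simp only [ContinuousMap.posPart_apply, ContinuousMap.add_apply, ContinuousMap.smul_apply,
    ContinuousMap.one_apply, smul_eq_mul, ramp_apply, mul_one]
  rw [posPart_def]
  rcases hs.eq_or_lt with rfl | hs
  · simp [hv.le]
  have hshift : s * (x - (m - v / s)) = v + s * (x - m) := by field_simp; ring
  rw [mul_max_of_nonneg (x - (m - v / s)) 0 hs.le, mul_zero, hshift]
  rcases le_total x m with hx | hx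
  · rw [max_eq_right (sub_nonpos.2 hx), mul_zero, add_zero, max_eq_right hv.le,
      max_eq_right (by nlinarith)]
  · rw [max_eq_left (sub_nonneg.2 hx)]

lemma posPart_smul_one_add_sum_mem_rampSpan (S : Finset ℝ) :
    ∀ (c : ℝ) (a : ℝ → ℝ), (c • 1 + ∑ k ∈ S, a k • ramp k)⁺ ∈ rampSpan := by
  refine Finset.induction_on_max S (fun c a => ?_) fun m S hS ih c a => ?_
  · simpa using posPart_smul_one_add_smul_ramp_mem_rampSpan c 0 0
  set ψ := c • 1 + ∑ k ∈ S, a k • ramp k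
  set s := ∑ k ∈ S, a k
  have hψ : c • 1 + ∑ k ∈ insert m S, a k • ramp k = ψ + a m • ramp m := by
    rw [Finset.sum_insert fun h => lt_irrefl _ (hS m h), add_left_comm, add_comm]
  -- `ψ` is affine on `[m, ∞)`, so adding `a m • ramp m` only changes `ψ⁺` there
  have hsplit : (ψ + a m • ramp m)⁺
      = ψ⁺ + (ψ m • 1 + (s + a m) • ramp m)⁺ - (ψ m • 1 + s • ramp m)⁺ := by
    ext x
    simp only [ContinuousMap.posPart_apply, ContinuousMap.add_apply, ContinuousMap.sub_apply,
      ContinuousMap.smul_apply, ContinuousMap.one_apply, smul_eq_mul, mul_one]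
    rcases le_total x m with hx | hx
    · simp [ramp_apply_of_le hx]
    · have hψx : ψ x = ψ m + s * (x - m) := by
        simp only [ψ, s, ContinuousMap.add_apply, ContinuousMap.smul_apply,
          ContinuousMap.one_apply, sum_smul_ramp_apply_of_le a (fun k hk => (hS k hk).le) hx]
        ring
      rw [hψx, ramp_apply_of_ge hx]
      ring_nf
  rw [hψ, hsplit]
  exact Submodule.sub_mem _ (Submodule.add_mem _ (ih c a)
    (posPart_smul_one_add_smul_ramp_mem_rampSpan _ _ _))
    (posPart_smul_one_add_smul_ramp_mem_rampSpan _ _ _)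

lemma posPart_mem_rampSpan {φ : C(ℝ, ℝ)} (hφ : φ ∈ rampSpan) : φ⁺ ∈ rampSpan := by
  obtain ⟨c, S, a, rfl⟩ := exists_eq_smul_one_add_sum_of_mem_rampSpan hφ
  exact posPart_smul_one_add_sum_mem_rampSpan S c a

lemma abs_mem_rampSpan {φ : C(ℝ, ℝ)} (hφ : φ ∈ rampSpan) : |φ| ∈ rampSpan := by
  rw [← posPart_add_negPart, ← posPart_neg]
  exact Submodule.add_mem _ (posPart_mem_rampSpan hφ) (posPart_mem_rampSpan (neg_mem hφ))

noncomputable def relRamp (k : ℝ) : C(ℝ, ℝ) :=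
  (ContinuousMap.id ℝ - k • (ContinuousMap.id ℝ + 1))⁺

@[simp] lemma relRamp_apply (k x : ℝ) : relRamp k x = max (x - k * (x + 1)) 0 := by
  simp [relRamp, posPart_def, mul_add]

lemma ramp_eq_smul_relRamp {k : ℝ} (hk : 0 < 1 + k) :
    ramp k = (1 + k) • relRamp (k / (1 + k)) := by
  ext x
  rw [ContinuousMap.smul_apply, relRamp_apply, ramp_apply, smul_eq_mul,
    mul_max_of_nonneg _ _ hk.le, mul_zero]
  congr 1
  field_simp
  ring

lemma relRamp_eq_smul_ramp {k : ℝ} (hk : k < 1) :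
    relRamp k = (1 - k) • ramp (k / (1 - k)) := by
  have hk' : 0 < 1 - k := sub_pos.2 hk
  ext x
  rw [ContinuousMap.smul_apply, relRamp_apply, ramp_apply, smul_eq_mul,
    mul_max_of_nonneg _ _ hk'.le, mul_zero]
  congr 1
  field_simp
  ring

lemma eqOn_ramp_of_nonpos {k : ℝ} (hk : k ≤ 0) :
    EqOn (ramp k) (ContinuousMap.id ℝ - k • 1) (Ici 0) := fun x (hx : 0 ≤ x) => by
  simp [ramp_apply_of_ge (hk.trans hx)]

lemma eqOn_ramp_zero : EqOn (ramp 0) (ContinuousMap.id ℝ) (Ici 0) := by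
  simpa using eqOn_ramp_of_nonpos le_rfl

lemma eqOn_relRamp_of_one_le {k : ℝ} (hk : 1 ≤ k) : EqOn (relRamp k) 0 (Ici 0) :=
  fun x (hx : 0 ≤ x) => by
    simpa using (by nlinarith : x - k * (x + 1) ≤ 0)

noncomputable def relRampSpan : Submodule ℝ C(ℝ, ℝ) :=
  Submodule.span ℝ ({ContinuousMap.id ℝ + 1, ContinuousMap.id ℝ} ∪ range relRamp)

lemma exists_mem_relRampSpan_eqOn {φ : C(ℝ, ℝ)} (hφ : φ ∈ {1} ∪ range ramp) :
    ∃ ψ ∈ relRampSpan, EqOn φ ψ (Ici 0) := by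
  have hid1 : ContinuousMap.id ℝ + 1 ∈ relRampSpan :=
    Submodule.subset_span (Or.inl (mem_insert _ _))
  have hid : ContinuousMap.id ℝ ∈ relRampSpan :=
    Submodule.subset_span (Or.inl (mem_insert_of_mem _ rfl))
  have h1 : (1 : C(ℝ, ℝ)) ∈ relRampSpan := by
    simpa using Submodule.sub_mem _ hid1 hid
  rcases hφ with rfl | ⟨k, rfl⟩
  · exact ⟨1, h1, eqOn_refl _ _⟩
  rcases le_or_gt k 0 with hk | hk
  · exact ⟨_, Submodule.sub_mem _ hid (Submodule.smul_mem _ k h1), eqOn_ramp_of_nonpos hk⟩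
  · rw [ramp_eq_smul_relRamp (by linarith)]
    exact ⟨_, Submodule.smul_mem _ _ (Submodule.subset_span (Or.inr ⟨_, rfl⟩)), eqOn_refl _ _⟩

lemma exists_mem_rampSpan_eqOn {φ : C(ℝ, ℝ)}
    (hφ : φ ∈ {ContinuousMap.id ℝ + 1, ContinuousMap.id ℝ} ∪ range relRamp) :
    ∃ ψ ∈ rampSpan, EqOn φ ψ (Ici 0) := by
  rcases hφ with (rfl | rfl) | ⟨k, rfl⟩
  · exact ⟨_, Submodule.add_mem _ (ramp_mem_rampSpan 0) one_mem_rampSpan,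
      fun x hx => by simp [eqOn_ramp_zero hx]⟩
  · exact ⟨_, ramp_mem_rampSpan 0, eqOn_ramp_zero.symm⟩
  rcases le_or_gt 1 k with hk | hk
  · exact ⟨0, Submodule.zero_mem _, eqOn_relRamp_of_one_le hk⟩
  · rw [relRamp_eq_smul_ramp hk]
    exact ⟨_, Submodule.smul_mem _ _ (ramp_mem_rampSpan _), eqOn_refl _ _⟩

namespace MeasureTheory.AEEqFun

variable {m0 : MeasurableSpace Ω} {μ : Measure Ω} (f : Ω →ₘ[μ] ℝ)

noncomputable def compLinearMap : C(ℝ, ℝ) →ₗ[ℝ] Ω →ₘ[μ] ℝ where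
  toFun φ := comp φ φ.continuous f
  map_add' φ ψ := by
    ext1
    filter_upwards [coeFn_comp _ (φ + ψ).continuous f, coeFn_comp _ φ.continuous f,
      coeFn_comp _ ψ.continuous f, coeFn_add (comp φ φ.continuous f) (comp ψ ψ.continuous f)]
      with ω h h₁ h₂ h₃
    rw [h, h₃, Pi.add_apply, h₁, h₂]
    rfl
  map_smul' c φ := by
    ext1
    filter_upwards [coeFn_comp _ (c • φ).continuous f, coeFn_comp _ φ.continuous f,
      coeFn_smul c (comp φ φ.continuous f)] with ω h h₁ h₂
    rw [RingHom.id_apply, h, h₂, Pi.smul_apply, h₁]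
    rfl

lemma coeFn_compLinearMap (φ : C(ℝ, ℝ)) : compLinearMap f φ =ᵐ[μ] φ ∘ f :=
  coeFn_comp _ φ.continuous f

lemma compLinearMap_one : compLinearMap f 1 = 1 := by
  ext1
  filter_upwards [coeFn_compLinearMap f 1, coeFn_one (β := ℝ) (μ := μ)] with ω h h₁
  simp [h, h₁]

lemma compLinearMap_id : compLinearMap f (ContinuousMap.id ℝ) = f := by
  ext1
  filter_upwards [coeFn_compLinearMap f (ContinuousMap.id ℝ)] with ω h
  simp [h]

lemma compLinearMap_sup (φ ψ : C(ℝ, ℝ)) :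
    compLinearMap f (φ ⊔ ψ) = compLinearMap f φ ⊔ compLinearMap f ψ := by
  ext1
  filter_upwards [coeFn_compLinearMap f (φ ⊔ ψ), coeFn_compLinearMap f φ,
    coeFn_compLinearMap f ψ, coeFn_sup (compLinearMap f φ) (compLinearMap f ψ)]
    with ω h h₁ h₂ h₃
  simp [h, h₁, h₂, h₃]

lemma compLinearMap_posPart (φ : C(ℝ, ℝ)) :
    compLinearMap f φ⁺ = compLinearMap f φ ⊔ 0 := by
  rw [posPart_def, compLinearMap_sup, map_zero]

lemma compLinearMap_abs (φ : C(ℝ, ℝ)) : compLinearMap f |φ| = |compLinearMap f φ| := by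
  rw [abs, abs, compLinearMap_sup, map_neg]

lemma compLinearMap_ramp (k : ℝ) : compLinearMap f (ramp k) = (f - k • 1) ⊔ 0 := by
  rw [ramp, compLinearMap_posPart, map_sub, map_smul, compLinearMap_id, compLinearMap_one]

lemma compLinearMap_congr_of_nonneg (hf : 0 ≤ f) {φ ψ : C(ℝ, ℝ)} (h : EqOn φ ψ (Ici 0)) :
    compLinearMap f φ = compLinearMap f ψ := by
  ext1
  filter_upwards [coeFn_le.2 hf, coeFn_zero (β := ℝ) (μ := μ), coeFn_compLinearMap f φ,
    coeFn_compLinearMap f ψ] with ω h₀ h₁ h₂ h₃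
  rw [h₁] at h₀
  simp only [h₂, h₃, Function.comp_apply]
  exact h h₀

lemma abs_sup_zero_le_abs (g : Ω →ₘ[μ] ℝ) : |g ⊔ 0| ≤ |g| := by
  rw [← coeFn_le]
  filter_upwards [coeFn_abs (g ⊔ 0), coeFn_abs g, coeFn_sup g 0, coeFn_zero (β := ℝ) (μ := μ)]
    with ω h h₁ h₂ h₃
  simp only [h, h₁, h₂, h₃, Pi.zero_apply]
  exact abs_max_le_max_abs_abs.trans (by simp)

end MeasureTheory.AEEqFun

open MeasureTheory.AEEqFun

section OptionSpace

variable {m0 : MeasurableSpace Ω} {μ : Measure Ω}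

lemma optionSpace_le_of_isIdealL0 {X : Submodule ℝ (Ω →ₘ[μ] ℝ)} (hX : IsIdealL0 X)
    (h1 : 1 ∈ X) {f : Ω →ₘ[μ] ℝ} (hf : f ∈ X) : optionSpace f ≤ X := by
  refine Submodule.span_le.2 ?_
  rintro _ (rfl | ⟨k, rfl⟩)
  · exact h1
  · exact hX _ _ (abs_sup_zero_le_abs _) (X.sub_mem hf (X.smul_mem k h1))

lemma optionSpace_eq_span_image (f : Ω →ₘ[μ] ℝ) :
    optionSpace f = Submodule.span ℝ (compLinearMap f '' ({1} ∪ range ramp)) := by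
  rw [image_union, image_singleton, ← range_comp, compLinearMap_one, optionSpace]
  congr
  ext g
  simp [compLinearMap_ramp, eq_comm]

lemma optionSpace_eq_map (f : Ω →ₘ[μ] ℝ) : optionSpace f = rampSpan.map (compLinearMap f) := by
  rw [rampSpan, Submodule.map_span, optionSpace_eq_span_image]

lemma abs_mem_optionSpace {f g : Ω →ₘ[μ] ℝ} (hg : g ∈ optionSpace f) : |g| ∈ optionSpace f := by
  rw [optionSpace_eq_map] at hg ⊢
  obtain ⟨φ, hφ, rfl⟩ := hg
  rw [← compLinearMap_abs]
  exact Submodule.mem_map_of_mem (abs_mem_rampSpan hφ)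

lemma span_relRamp_eq_span_image (f : Ω →ₘ[μ] ℝ) :
    Submodule.span ℝ ({f + 1, f} ∪ {g | ∃ k : ℝ, g = (f - k • (f + 1)) ⊔ 0})
      = Submodule.span ℝ (compLinearMap f ''
          ({ContinuousMap.id ℝ + 1, ContinuousMap.id ℝ} ∪ range relRamp)) := by
  rw [image_union, image_pair, ← range_comp, map_add, compLinearMap_id, compLinearMap_one]
  congr
  ext g
  simp [relRamp, compLinearMap_posPart, compLinearMap_id, compLinearMap_one, eq_comm]

lemma span_image_compLinearMap_le {f : Ω →ₘ[μ] ℝ} (hf : 0 ≤ f) {G H : Set C(ℝ, ℝ)}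
    (hGH : ∀ φ ∈ G, ∃ ψ ∈ Submodule.span ℝ H, EqOn φ ψ (Ici 0)) :
    Submodule.span ℝ (compLinearMap f '' G) ≤ Submodule.span ℝ (compLinearMap f '' H) := by
  rw [Submodule.span_le, ← Submodule.map_span]
  rintro _ ⟨φ, hφ, rfl⟩
  obtain ⟨ψ, hψ, hφψ⟩ := hGH φ hφ
  rw [compLinearMap_congr_of_nonneg f hf hφψ]
  exact Submodule.mem_map_of_mem hψ

end OptionSpace

theorem optionSpace_sublattice_general
    {m0 : MeasurableSpace Ω} {μ : Measure Ω}
    (X : Submodule ℝ (Ω →ₘ[μ] ℝ)) (hX : IsIdealL0 X)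
    (hconst : ∀ c : ℝ, AEEqFun.const Ω (β := ℝ) c ∈ X)
    (f : Ω →ₘ[μ] ℝ) (hfX : f ∈ X) (hf : 0 ≤ f) :
    ((optionSpace f : Set (Ω →ₘ[μ] ℝ)) ⊆ X) ∧
    (∀ g ∈ optionSpace f, |g| ∈ optionSpace f) ∧
    optionSpace f = Submodule.span ℝ
      ({f + 1, f} ∪ {g | ∃ k : ℝ, g = (f - k • (f + 1)) ⊔ 0}) := by
  refine ⟨optionSpace_le_of_isIdealL0 hX (hconst 1) hfX, fun g => abs_mem_optionSpace, ?_⟩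
  rw [optionSpace_eq_span_image, span_relRamp_eq_span_image]
  exact le_antisymm (span_image_compLinearMap_le hf fun _ => exists_mem_relRampSpan_eqOn)
    (span_image_compLinearMap_le hf fun _ => exists_mem_rampSpan_eqOn)

/-- For a nonnegative `f` in an ideal `X` of `L⁰` containing the constants,
the option space `O_f` is a sublattice of `X` and coincides with
`span{f + 1, f, (f − k(f+1))⁺ : k ∈ ℝ}`. -/
theorem optionSpace_sublattice
    {m0 : MeasurableSpace Ω} {μ : Measure Ω} [IsProbabilityMeasure μ]
    (X : Submodule ℝ (Ω →ₘ[μ] ℝ)) (hX : IsIdealL0 X)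
    (hconst : ∀ c : ℝ, AEEqFun.const Ω (β := ℝ) c ∈ X)
    (f : Ω →ₘ[μ] ℝ) (hfX : f ∈ X) (hf : 0 ≤ f) :
    ((optionSpace f : Set (Ω →ₘ[μ] ℝ)) ⊆ X) ∧
    (∀ g ∈ optionSpace f, |g| ∈ optionSpace f) ∧
    optionSpace f = Submodule.span ℝ
      ({f + 1, f} ∪ {g | ∃ k : ℝ, g = (f - k • (f + 1)) ⊔ 0}) :=
  optionSpace_sublattice_general (m0 := m0) X hX hconst f hfX hf
end

section
/- Let X be an ideal of L⁰(Ω, Σ, ℙ) containing the constants and admitting a strictly positive order continuous linear functional. Let Z be a sublattice of X and g ∈ X. If there exists a sequence (g_n) in Z with g_n → g almost everywhere, then g belongs to the σ(X, X_n^∼)-closure of Z, where X_n^∼ is the order continuous dual of X. -/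
open MeasureTheory Filter

universe u

variable {Ω : Type u}

/-- A functional on the subspace `X` of `L⁰` is order continuous if it carries nets
order-converging to `0` (within `X`) to nets converging to `0` in `ℝ`. -/
def OrderContinuousOn {m0 : MeasurableSpace Ω} {μ : Measure Ω}
    (X : Submodule ℝ (Ω →ₘ[μ] ℝ)) (φ : ↥X → ℝ) : Prop :=
  ∀ (ι : Type u) (_ : Preorder ι) (_ : IsDirected ι (· ≤ ·)) (_ : Nonempty ι)
    (y : ι → ↥X), OrderConvNetIn X (fun a => (y a : Ω →ₘ[μ] ℝ)) 0 →
      Tendsto (fun a => φ (y a)) atTop (nhds 0)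

/-- A functional on `X` is strictly positive if `φ(x) > 0` whenever `x > 0`. -/
def StrictlyPositiveOn {m0 : MeasurableSpace Ω} {μ : Measure Ω}
    (X : Submodule ℝ (Ω →ₘ[μ] ℝ)) (φ : ↥X → ℝ) : Prop :=
  ∀ x : ↥X, 0 < (x : Ω →ₘ[μ] ℝ) → 0 < φ x

/-- The weak topology `σ(X, Xₙ~)` induced on `X` by its order continuous dual. -/
noncomputable def weakOCTopology {m0 : MeasurableSpace Ω} {μ : Measure Ω}
    (X : Submodule ℝ (Ω →ₘ[μ] ℝ)) : TopologicalSpace ↥X :=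
  ⨅ φ ∈ {φ : ↥X →ₗ[ℝ] ℝ | OrderContinuousOn X ⇑φ},
    TopologicalSpace.induced ⇑φ inferInstance

section AuxReal

private lemma real_min_eq (a b : ℝ) : min a b = 2⁻¹ * (a + b - |a - b|) := by
  rcases le_total a b with h | h
  · rw [min_eq_left h, abs_of_nonpos (by linarith)]; ring
  · rw [min_eq_right h, abs_of_nonneg (by linarith)]; ring

private lemma real_max_eq (a b : ℝ) : max a b = 2⁻¹ * (a + b + |a - b|) := by
  rcases le_total a b with h | h
  · rw [max_eq_right h, abs_of_nonpos (by linarith)]; ring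
  · rw [max_eq_left h, abs_of_nonneg (by linarith)]; ring

private lemma real_clamp_abs_le {a c : ℝ} (hc : 0 ≤ c) : |max (min a c) (-c)| ≤ c := by
  rw [abs_le]
  exact ⟨le_max_right _ _, max_le (min_le_right _ _) (by linarith)⟩

private lemma real_clamp_dist_le {a b c : ℝ} (hc : 0 ≤ c) :
    |max (min a c) (-c) - max (min b c) (-c)| ≤ c + c := by
  have h1 := real_clamp_abs_le (a := a) hc
  have h2 := real_clamp_abs_le (a := b) hc
  calc |max (min a c) (-c) - max (min b c) (-c)|
      ≤ |max (min a c) (-c)| + |max (min b c) (-c)| := abs_sub _ _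
    _ ≤ c + c := add_le_add h1 h2

private lemma real_clamp_sub_self_le {a c : ℝ} (hc : 0 ≤ c) :
    |max (min a c) (-c) - a| ≤ |a| := by
  have h1 := le_abs_self a
  have h2 := neg_abs_le a
  rcases le_total a c with h | h
  · rcases le_total (-c) a with h' | h'
    · rw [min_eq_left h, max_eq_left h', sub_self, abs_zero]; exact abs_nonneg _
    · rw [min_eq_left h, max_eq_right h', abs_of_nonneg (by linarith)]; linarith
  · rw [min_eq_right h, max_eq_left (by linarith), abs_of_nonpos (by linarith)]; linarith

private lemma real_clamp_sub_le (a b : ℝ) :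
    |max (min a |b|) (-|b|) - a| ≤ |a - b| := by
  have hb := abs_nonneg b
  have h1 := le_abs_self b
  have h2 := neg_abs_le b
  have h3 := le_abs_self (a - b)
  have h4 := neg_abs_le (a - b)
  rcases le_total a |b| with h | h
  · rcases le_total (-|b|) a with h' | h'
    · rw [min_eq_left h, max_eq_left h', sub_self, abs_zero]; exact abs_nonneg _
    · rw [min_eq_left h, max_eq_right h', abs_of_nonneg (by linarith)]; linarith
  · rw [min_eq_right h, max_eq_left (by linarith), abs_of_nonpos (by linarith)]; linarith

end AuxReal

section AuxAEF

private lemma aef_inf_eq {m0 : MeasurableSpace Ω} {μ : Measure Ω} (x y : Ω →ₘ[μ] ℝ) :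
    x ⊓ y = (2⁻¹ : ℝ) • (x + y - |x - y|) := by
  apply AEEqFun.ext
  filter_upwards [AEEqFun.coeFn_inf x y,
    AEEqFun.coeFn_smul (2⁻¹ : ℝ) (x + y - |x - y|),
    AEEqFun.coeFn_sub (x + y) |x - y|, AEEqFun.coeFn_add x y,
    AEEqFun.coeFn_abs (x - y), AEEqFun.coeFn_sub x y] with ω h1 h2 h3 h4 h5 h6
  rw [h1, h2, Pi.smul_apply, smul_eq_mul, h3, Pi.sub_apply, h4, h5, Pi.add_apply, h6,
    Pi.sub_apply]
  exact real_min_eq _ _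

private lemma aef_sup_eq {m0 : MeasurableSpace Ω} {μ : Measure Ω} (x y : Ω →ₘ[μ] ℝ) :
    x ⊔ y = (2⁻¹ : ℝ) • (x + y + |x - y|) := by
  apply AEEqFun.ext
  filter_upwards [AEEqFun.coeFn_sup x y,
    AEEqFun.coeFn_smul (2⁻¹ : ℝ) (x + y + |x - y|),
    AEEqFun.coeFn_add (x + y) |x - y|, AEEqFun.coeFn_add x y,
    AEEqFun.coeFn_abs (x - y), AEEqFun.coeFn_sub x y] with ω h1 h2 h3 h4 h5 h6
  rw [h1, h2, Pi.smul_apply, smul_eq_mul, h3, Pi.add_apply, h4, h5, Pi.add_apply, h6,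
    Pi.sub_apply]
  exact real_max_eq _ _

end AuxAEF

private lemma key_tendsto {m0 : MeasurableSpace Ω} {μ : Measure Ω}
    (X : Submodule ℝ (Ω →ₘ[μ] ℝ)) (hX : IsIdealL0 X)
    (y : ℕ → ↥X) (x : ↥X) (b : Ω →ₘ[μ] ℝ) (hb : b ∈ X)
    (hbd : ∀ n, |((y n : Ω →ₘ[μ] ℝ)) - (x : Ω →ₘ[μ] ℝ)| ≤ b)
    (hae : ∀ᵐ ω ∂μ, Tendsto (fun n => ((y n : Ω →ₘ[μ] ℝ)) ω - ((x : Ω →ₘ[μ] ℝ)) ω)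
      atTop (nhds 0))
    (φ : ↥X →ₗ[ℝ] ℝ) (hφ : OrderContinuousOn X ⇑φ) :
    Tendsto (fun n => φ (y n)) atTop (nhds (φ x)) := by
  classical
  set d : ℕ → (Ω →ₘ[μ] ℝ) := fun n => (y n : Ω →ₘ[μ] ℝ) - (x : Ω →ₘ[μ] ℝ) with hd
  have hdm : ∀ n, Measurable (⇑(d n)) := fun n => (d n).stronglyMeasurable.measurable
  have hBm : Measurable (⇑b) := b.stronglyMeasurable.measurable
  set W : ℕ → Ω → ℝ := fun n => ⇑(d n) with hW
  set B : Ω → ℝ := ⇑b with hB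
  set v : ℕ → Ω → ℝ := fun j ω => max 0 (min |W j ω| (B ω)) with hv
  have hvm : ∀ j, Measurable (v j) := fun j => measurable_const.max (((hdm j).abs).min hBm)
  have hv0 : ∀ j ω, 0 ≤ v j ω := fun j ω => le_max_left _ _
  have hvB : ∀ j ω, v j ω ≤ max 0 (B ω) := fun j ω => max_le_max le_rfl (min_le_right _ _)
  have hvW : ∀ j ω, v j ω ≤ |W j ω| := fun j ω => max_le (abs_nonneg _) (min_le_left _ _)
  set s : ℕ → Ω → ℝ := fun n ω => ⨆ m : ℕ, v (n + m) ω with hs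
  have hbdd : ∀ n ω, BddAbove (Set.range fun m => v (n + m) ω) := fun n ω =>
    ⟨max 0 (B ω), by rintro _ ⟨m, rfl⟩; exact hvB _ _⟩
  have hsm : ∀ n, Measurable (s n) := fun n => Measurable.iSup fun m => hvm (n + m)
  have hs0 : ∀ n ω, 0 ≤ s n ω := fun n ω => (hv0 (n + 0) ω).trans (le_ciSup (hbdd n ω) 0)
  have hsB : ∀ n ω, s n ω ≤ max 0 (B ω) := fun n ω => ciSup_le fun m => hvB _ _
  have hsv : ∀ n ω, v n ω ≤ s n ω := fun n ω => by
    have h := le_ciSup (hbdd n ω) 0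
    simpa using h
  have hs_anti : ∀ ω, Antitone fun n => s n ω := fun ω => antitone_nat_of_succ_le fun n => by
    refine ciSup_le fun m => ?_
    have h1 : n + 1 + m = n + (m + 1) := by omega
    rw [h1]
    exact le_ciSup (hbdd n ω) (m + 1)
  have hs_lim : ∀ ω, Tendsto (fun j => W j ω) atTop (nhds 0) →
      Tendsto (fun n => s n ω) atTop (nhds 0) := by
    intro ω hWt
    rw [Metric.tendsto_atTop] at hWt ⊢
    intro ε hε
    obtain ⟨N, hN⟩ := hWt (ε / 2) (by linarith)
    refine ⟨N, fun n hn => ?_⟩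
    rw [Real.dist_eq, sub_zero, abs_of_nonneg (hs0 n ω)]
    have hle : s n ω ≤ ε / 2 := by
      refine ciSup_le fun m => (hvW _ _).trans ?_
      have h := hN (n + m) (by omega)
      rw [Real.dist_eq, sub_zero] at h
      exact h.le
    linarith
  set z : ℕ → (Ω →ₘ[μ] ℝ) := fun n => AEEqFun.mk (s n) (hsm n).aestronglyMeasurable with hz
  have hz_coe : ∀ n, ⇑(z n) =ᵐ[μ] s n := fun n => AEEqFun.coeFn_mk _ _
  have hzX : ∀ n, z n ∈ X := by
    intro n
    refine hX (z n) b ?_ hb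
    rw [← AEEqFun.coeFn_le]
    filter_upwards [AEEqFun.coeFn_abs (z n), AEEqFun.coeFn_abs b, hz_coe n] with ω h1 h2 h3
    rw [h1, h2, h3, abs_of_nonneg (hs0 n ω)]
    exact (hsB n ω).trans (max_le (abs_nonneg _) (le_abs_self _))
  have hz_anti : Antitone z := antitone_nat_of_succ_le fun n => by
    rw [← AEEqFun.coeFn_le]
    filter_upwards [hz_coe n, hz_coe (n + 1)] with ω h1 h2
    rw [h1, h2]
    exact hs_anti ω (Nat.le_succ n)
  have hz0 : ∀ n, (0 : Ω →ₘ[μ] ℝ) ≤ z n := fun n => by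
    rw [← AEEqFun.coeFn_le]
    filter_upwards [hz_coe n, AEEqFun.coeFn_zero (β := ℝ) (μ := μ)] with ω h1 h2
    rw [h1, h2, Pi.zero_apply]
    exact hs0 n ω
  have hWb : ∀ᵐ ω ∂μ, ∀ j, |W j ω| ≤ B ω := by
    rw [ae_all_iff]
    intro j
    have h := (AEEqFun.coeFn_le).2 (hbd j)
    filter_upwards [h, AEEqFun.coeFn_abs (d j)] with ω h1 h2
    calc |W j ω| = ⇑|d j| ω := h2.symm
      _ ≤ B ω := h1
  have hWae : ∀ᵐ ω ∂μ, ∀ j, W j ω = ((y j : Ω →ₘ[μ] ℝ)) ω - ((x : Ω →ₘ[μ] ℝ)) ω := by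
    rw [ae_all_iff]
    intro j
    filter_upwards [AEEqFun.coeFn_sub ((y j : Ω →ₘ[μ] ℝ)) ((x : Ω →ₘ[μ] ℝ))] with ω h
    simpa using h
  have hzinf : ∀ h' ∈ X, (∀ n : ℕ, h' ≤ z n) → h' ≤ 0 := by
    intro h' _ hle
    have hle' : ∀ᵐ ω ∂μ, ∀ n, ⇑h' ω ≤ s n ω := by
      rw [ae_all_iff]
      intro n
      filter_upwards [(AEEqFun.coeFn_le).2 (hle n), hz_coe n] with ω h1 h2
      rw [← h2]; exact h1
    rw [← AEEqFun.coeFn_le]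
    filter_upwards [hle', hae, hWae, AEEqFun.coeFn_zero (β := ℝ) (μ := μ)] with ω h1 h2 h3 h4
    rw [h4, Pi.zero_apply]
    have hW0 : Tendsto (fun j => W j ω) atTop (nhds 0) :=
      Tendsto.congr (fun j => (h3 j).symm) h2
    exact ge_of_tendsto' (hs_lim ω hW0) h1
  have hdom : ∀ n : ℕ, |((y n - x : ↥X) : Ω →ₘ[μ] ℝ) - 0| ≤ z n := by
    intro n
    rw [sub_zero]
    have hcoe : ((y n - x : ↥X) : Ω →ₘ[μ] ℝ) = d n := rfl
    rw [hcoe, ← AEEqFun.coeFn_le]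
    filter_upwards [AEEqFun.coeFn_abs (d n), hz_coe n, hWb] with ω h1 h2 h3
    rw [h1, h2]
    have hvn : v n ω = |W n ω| := by
      rw [hv]
      simp only []
      rw [min_eq_left (h3 n), max_eq_right (abs_nonneg _)]
    calc |⇑(d n) ω| = v n ω := hvn.symm
      _ ≤ s n ω := hsv n ω
  have hoc : Tendsto (fun a : ULift.{u} ℕ => φ (y a.down - x)) atTop (nhds 0) := by
    refine hφ (ULift.{u} ℕ) inferInstance
      ⟨fun a c => ⟨⟨max a.down c.down⟩, le_max_left _ _, le_max_right _ _⟩⟩ ⟨⟨0⟩⟩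
      (fun a => y a.down - x) ?_
    exact ⟨fun a => z a.down, fun a => hzX _, fun a c hac => hz_anti hac, fun a => hz0 _,
      fun h' h1 h2 => hzinf h' h1 (fun n => h2 ⟨n⟩),
      Eventually.of_forall fun a => hdom a.down⟩
  have hup : Tendsto (fun n : ℕ => (⟨n⟩ : ULift.{u} ℕ)) atTop atTop :=
    tendsto_atTop_atTop_of_monotone (fun a c h => h) (fun c => ⟨c.down, le_rfl⟩)
  have h2 := hoc.comp hup
  rw [← tendsto_sub_nhds_zero_iff]
  have h3 : (fun n : ℕ => φ (y n) - φ x) = fun n => φ (y n - x) :=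
    funext fun n => (map_sub φ _ _).symm
  rw [h3]
  exact h2

private lemma tendsto_weakOC {m0 : MeasurableSpace Ω} {μ : Measure Ω}
    {X : Submodule ℝ (Ω →ₘ[μ] ℝ)} (y : ℕ → ↥X) (x : ↥X)
    (h : ∀ φ : ↥X →ₗ[ℝ] ℝ, OrderContinuousOn X ⇑φ →
      Tendsto (fun n => φ (y n)) atTop (nhds (φ x))) :
    Tendsto y atTop (@nhds _ (weakOCTopology X) x) := by
  rw [weakOCTopology]
  simp only [_root_.nhds_iInf, tendsto_iInf]
  intro φ hφ
  rw [nhds_induced, tendsto_comap_iff]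
  exact h φ hφ

private lemma mem_weak_closure {m0 : MeasurableSpace Ω} {μ : Measure Ω}
    {X : Submodule ℝ (Ω →ₘ[μ] ℝ)} (S : Set ↥X) (y : ℕ → ↥X) (x : ↥X)
    (hS : ∀ n, y n ∈ S)
    (h : ∀ φ : ↥X →ₗ[ℝ] ℝ, OrderContinuousOn X ⇑φ →
      Tendsto (fun n => φ (y n)) atTop (nhds (φ x))) :
    x ∈ @closure _ (weakOCTopology X) S := by
  letI := weakOCTopology X
  exact mem_closure_of_tendsto (tendsto_weakOC y x h) (Eventually.of_forall hS)

/-- In an ideal `X` of `L⁰` (containing constants, with a strictly positive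
order continuous functional), if a sequence from a sublattice `Z` of `X` converges a.e. to
`g ∈ X`, then `g` lies in the `σ(X, Xₙ~)`-closure of `Z`. -/
theorem mem_weak_closure_of_ae_tendsto
    {m0 : MeasurableSpace Ω} {μ : Measure Ω} [IsProbabilityMeasure μ]
    (X : Submodule ℝ (Ω →ₘ[μ] ℝ)) (hX : IsIdealL0 X)
    (hconst : ∀ c : ℝ, AEEqFun.const Ω (β := ℝ) c ∈ X)
    (hφ : ∃ φ : ↥X →ₗ[ℝ] ℝ, OrderContinuousOn X ⇑φ ∧ StrictlyPositiveOn X ⇑φ)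
    (Z : Submodule ℝ ↥X)
    (hZ : ∀ z ∈ Z, ∀ w : ↥X, (w : Ω →ₘ[μ] ℝ) = |(z : Ω →ₘ[μ] ℝ)| → w ∈ Z)
    (g : ↥X) (gn : ℕ → ↥X) (hgn : ∀ n, gn n ∈ Z)
    (hae : ∀ᵐ ω ∂μ, Tendsto (fun n => (gn n : Ω →ₘ[μ] ℝ) ω) atTop
      (nhds ((g : Ω →ₘ[μ] ℝ) ω))) :
    g ∈ @closure _ (weakOCTopology X) (Z : Set ↥X) := by
  classical
  clear hconst hφ
  have habs : ∀ p : ↥X, |(p : Ω →ₘ[μ] ℝ)| ∈ X := by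
    intro p
    refine hX _ _ ?_ p.2
    rw [← AEEqFun.coeFn_le]
    filter_upwards [AEEqFun.coeFn_abs |(p : Ω →ₘ[μ] ℝ)|,
      AEEqFun.coeFn_abs (p : Ω →ₘ[μ] ℝ)] with ω h1 h2
    rw [h1, h2, abs_abs]
  set eabs : ↥X → ↥X := fun p => ⟨|(p : Ω →ₘ[μ] ℝ)|, habs p⟩ with he
  set einf : ↥X → ↥X → ↥X := fun p q => (2⁻¹ : ℝ) • (p + q - eabs (p - q)) with hei
  set esup : ↥X → ↥X → ↥X := fun p q => (2⁻¹ : ℝ) • (p + q + eabs (p - q)) with hes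
  have coe_einf : ∀ p q : ↥X, ((einf p q : ↥X) : Ω →ₘ[μ] ℝ)
      = (p : Ω →ₘ[μ] ℝ) ⊓ (q : Ω →ₘ[μ] ℝ) := by
    intro p q
    show (2⁻¹ : ℝ) • ((p : Ω →ₘ[μ] ℝ) + q - |(p : Ω →ₘ[μ] ℝ) - q|) = _
    rw [aef_inf_eq]
  have coe_esup : ∀ p q : ↥X, ((esup p q : ↥X) : Ω →ₘ[μ] ℝ)
      = (p : Ω →ₘ[μ] ℝ) ⊔ (q : Ω →ₘ[μ] ℝ) := by
    intro p q
    show (2⁻¹ : ℝ) • ((p : Ω →ₘ[μ] ℝ) + q + |(p : Ω →ₘ[μ] ℝ) - q|) = _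
    rw [aef_sup_eq]
  have habsZ : ∀ p, p ∈ Z → eabs p ∈ Z := fun p hp => hZ p hp (eabs p) rfl
  have hinfZ : ∀ p q, p ∈ Z → q ∈ Z → einf p q ∈ Z := fun p q hp hq =>
    Z.smul_mem _ (Z.sub_mem (Z.add_mem hp hq) (habsZ _ (Z.sub_mem hp hq)))
  have hsupZ : ∀ p q, p ∈ Z → q ∈ Z → esup p q ∈ Z := fun p q hp hq =>
    Z.smul_mem _ (Z.add_mem (Z.add_mem hp hq) (habsZ _ (Z.sub_mem hp hq)))
  set tr : ℕ → ↥X → ↥X := fun k p => esup (einf p (eabs (gn k))) (-(eabs (gn k))) with ht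
  have htrZ : ∀ k n, tr k (gn n) ∈ Z := fun k n =>
    hsupZ _ _ (hinfZ _ _ (hgn n) (habsZ _ (hgn k))) (Z.neg_mem (habsZ _ (hgn k)))
  have coe_tr : ∀ k (p : ↥X), ((tr k p : ↥X) : Ω →ₘ[μ] ℝ) =
      (((p : Ω →ₘ[μ] ℝ) ⊓ |(gn k : Ω →ₘ[μ] ℝ)|) ⊔ (-|(gn k : Ω →ₘ[μ] ℝ)|)) := by
    intro k p
    rw [ht]
    simp only []
    rw [coe_esup, coe_einf]
    rfl
  have coe_tr_ae : ∀ k (p : ↥X), ∀ᵐ ω ∂μ, ((tr k p : ↥X) : Ω →ₘ[μ] ℝ) ω =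
      max (min ((p : Ω →ₘ[μ] ℝ) ω) |((gn k : Ω →ₘ[μ] ℝ)) ω|)
        (-|((gn k : Ω →ₘ[μ] ℝ)) ω|) := by
    intro k p
    rw [coe_tr]
    filter_upwards [
      AEEqFun.coeFn_sup ((p : Ω →ₘ[μ] ℝ) ⊓ |(gn k : Ω →ₘ[μ] ℝ)|) (-|(gn k : Ω →ₘ[μ] ℝ)|),
      AEEqFun.coeFn_inf (p : Ω →ₘ[μ] ℝ) |(gn k : Ω →ₘ[μ] ℝ)|,
      AEEqFun.coeFn_neg |(gn k : Ω →ₘ[μ] ℝ)|,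
      AEEqFun.coeFn_abs ((gn k : Ω →ₘ[μ] ℝ))] with ω h1 h2 h3 h4
    rw [h1, h2, h3, Pi.neg_apply, h4]
  have step1 : ∀ k, tr k g ∈ @closure _ (weakOCTopology X) (Z : Set ↥X) := by
    intro k
    refine mem_weak_closure (Z : Set ↥X) (fun n => tr k (gn n)) (tr k g)
      (fun n => htrZ k n) ?_
    intro φ hφOC
    refine key_tendsto X hX _ _ (|(gn k : Ω →ₘ[μ] ℝ)| + |(gn k : Ω →ₘ[μ] ℝ)|)
      (X.add_mem (habs _) (habs _)) ?_ ?_ φ hφOC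
    · intro n
      rw [← AEEqFun.coeFn_le]
      filter_upwards [coe_tr_ae k (gn n), coe_tr_ae k g,
        AEEqFun.coeFn_abs ((tr k (gn n) : Ω →ₘ[μ] ℝ) - (tr k g : Ω →ₘ[μ] ℝ)),
        AEEqFun.coeFn_sub ((tr k (gn n) : Ω →ₘ[μ] ℝ)) ((tr k g : Ω →ₘ[μ] ℝ)),
        AEEqFun.coeFn_add (|(gn k : Ω →ₘ[μ] ℝ)|) (|(gn k : Ω →ₘ[μ] ℝ)|),
        AEEqFun.coeFn_abs ((gn k : Ω →ₘ[μ] ℝ))] with ω h1 h2 h3 h4 h5 h6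
      rw [h3, h4, Pi.sub_apply, h1, h2, h5, Pi.add_apply, h6]
      exact real_clamp_dist_le (abs_nonneg _)
    · have hall : ∀ᵐ ω ∂μ, ∀ n, ((tr k (gn n) : ↥X) : Ω →ₘ[μ] ℝ) ω =
          max (min ((gn n : Ω →ₘ[μ] ℝ) ω) |((gn k : Ω →ₘ[μ] ℝ)) ω|)
            (-|((gn k : Ω →ₘ[μ] ℝ)) ω|) := ae_all_iff.2 fun n => coe_tr_ae k (gn n)
      filter_upwards [hae, hall, coe_tr_ae k g] with ω h1 h2 h3
      have ht1 : Tendsto (fun n =>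
          max (min ((gn n : Ω →ₘ[μ] ℝ) ω) |((gn k : Ω →ₘ[μ] ℝ)) ω|)
            (-|((gn k : Ω →ₘ[μ] ℝ)) ω|)) atTop
          (nhds (max (min ((g : Ω →ₘ[μ] ℝ) ω) |((gn k : Ω →ₘ[μ] ℝ)) ω|)
            (-|((gn k : Ω →ₘ[μ] ℝ)) ω|))) :=
        (h1.min tendsto_const_nhds).max tendsto_const_nhds
      have ht2 := ht1.sub (tendsto_const_nhds
        (x := max (min ((g : Ω →ₘ[μ] ℝ) ω) |((gn k : Ω →ₘ[μ] ℝ)) ω|)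
          (-|((gn k : Ω →ₘ[μ] ℝ)) ω|)))
      rw [sub_self] at ht2
      refine Tendsto.congr (fun n => ?_) ht2
      rw [h2 n, h3]
  have step2 : g ∈ @closure _ (weakOCTopology X)
      (@closure _ (weakOCTopology X) (Z : Set ↥X)) := by
    refine mem_weak_closure _ (fun k => tr k g) g step1 ?_
    intro φ hφOC
    refine key_tendsto X hX _ _ (|(g : Ω →ₘ[μ] ℝ)|) (habs g) ?_ ?_ φ hφOC
    · intro k
      rw [← AEEqFun.coeFn_le]
      filter_upwards [coe_tr_ae k g,
        AEEqFun.coeFn_abs ((tr k g : Ω →ₘ[μ] ℝ) - (g : Ω →ₘ[μ] ℝ)),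
        AEEqFun.coeFn_sub ((tr k g : Ω →ₘ[μ] ℝ)) ((g : Ω →ₘ[μ] ℝ)),
        AEEqFun.coeFn_abs ((g : Ω →ₘ[μ] ℝ))] with ω h1 h2 h3 h4
      rw [h2, h3, Pi.sub_apply, h1, h4]
      exact real_clamp_sub_self_le (abs_nonneg _)
    · have hall : ∀ᵐ ω ∂μ, ∀ k, ((tr k g : ↥X) : Ω →ₘ[μ] ℝ) ω =
          max (min ((g : Ω →ₘ[μ] ℝ) ω) |((gn k : Ω →ₘ[μ] ℝ)) ω|)
            (-|((gn k : Ω →ₘ[μ] ℝ)) ω|) := ae_all_iff.2 fun k => coe_tr_ae k g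
      filter_upwards [hae, hall] with ω h1 h2
      have ht : Tendsto (fun k => |(g : Ω →ₘ[μ] ℝ) ω - (gn k : Ω →ₘ[μ] ℝ) ω|) atTop
          (nhds 0) := by
        have h0 : Tendsto (fun k => (g : Ω →ₘ[μ] ℝ) ω - (gn k : Ω →ₘ[μ] ℝ) ω) atTop
            (nhds ((g : Ω →ₘ[μ] ℝ) ω - (g : Ω →ₘ[μ] ℝ) ω)) := tendsto_const_nhds.sub h1
        rw [sub_self] at h0
        simpa using h0.abs
      refine squeeze_zero_norm (fun k => ?_) ht
      rw [Real.norm_eq_abs, h2 k]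
      exact real_clamp_sub_le _ _
  letI := weakOCTopology X
  rwa [closure_closure] at step2
end

section
/- Let X be an ideal of L⁰(Ω, Σ, ℙ) containing the constants and admitting a strictly positive order continuous linear functional, and let f ∈ X₊ with σ(f) = Σ. Then for every g ∈ X there exists a sequence (g_n) in the option space O_f = span{1, (f−k)⁺ : k ∈ ℝ} with g_n → g almost everywhere; in particular O_f is σ(X, X_n^∼)-dense in X. -/
open MeasureTheory Filter

universe u

variable {Ω : Type u}

/-! A subspace `Z ⊆ X` that contains the options lying in `X` and contains the a.e. limit of
every sequence in `Z` dominated by an element of `X` is all of `X`. Indeed, the call spreads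
`(n + 1) ((f - k)⁺ - (f - k - 1 / (n + 1))⁺)` increase to `1_{f > k}`; a π-λ argument then gives
`1_{f ∈ B}` for every Borel set `B`, so by `σ(f) = Σ` every indicator, every simple function and
finally, by dominated simple approximation, every element of `X` lies in `Z`.

The a.e. sequential closure of the options is such a `Z`, because a diagonal sequence can be
extracted by Borel–Cantelli. So is every `σ(X, Xₙ~)`-closed subspace: a dominated a.e.
convergent sequence is order convergent in `X`, hence is carried to a convergent sequence by
every order continuous functional. -/

open Set Topology
open scoped ENNReal

theorem mul_max_sub_sub_mul_max_sub (t k : ℝ) {c : ℝ} (hc : 0 < c) :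
    c * max (t - k) 0 - c * max (t - (k + c⁻¹)) 0 = min (c * max (t - k) 0) 1 := by
  have hcc : c * c⁻¹ = 1 := mul_inv_cancel₀ hc.ne'
  rcases le_total t k with h₁ | h₁
  · rw [max_eq_right (by linarith), max_eq_right (by linarith [inv_pos.2 hc])]; simp
  rcases le_total t (k + c⁻¹) with h₂ | h₂
  · rw [max_eq_left (by linarith), max_eq_right (by linarith), min_eq_left (by nlinarith)]; ring
  · rw [max_eq_left (by linarith), max_eq_left (by linarith), min_eq_right (by nlinarith)]
    linear_combination hcc

theorem tendsto_min_mul_max_indicator (t k : ℝ) :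
    Tendsto (fun n : ℕ => min ((n + 1) * max (t - k) 0) 1) atTop
      (𝓝 ((Ioi k).indicator 1 t)) := by
  rcases le_or_gt t k with h | h
  · simp [h]
  · rw [indicator_of_mem (mem_Ioi.2 h), Pi.one_apply]
    refine tendsto_atTop_of_eventually_const (i₀ := ⌈(t - k)⁻¹⌉₊) fun n hn => ?_
    have : (t - k)⁻¹ ≤ n := Nat.ceil_le.1 hn
    rw [max_eq_left (by linarith), min_eq_right]
    rw [inv_le_iff_one_le_mul₀ (by linarith)] at this
    nlinarith

theorem abs_indicator_one_le {α : Type*} (s : Set α) (a : α) :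
    |s.indicator (1 : α → ℝ) a| ≤ 1 := by
  simpa using norm_indicator_le_norm_self (1 : α → ℝ) a (s := s)

theorem exists_tendsto_ae_diagonal {α E : Type*} {m : MeasurableSpace α} {μ : Measure α}
    [IsFiniteMeasure μ] [PseudoEMetricSpace E] {a : ℕ → ℕ → α → E} {b : ℕ → α → E}
    {c : α → E} (ha_meas : ∀ n k, AEStronglyMeasurable (a n k) μ)
    (ha : ∀ n, ∀ᵐ x ∂μ, Tendsto (fun k => a n k x) atTop (𝓝 (b n x)))
    (hb : ∀ᵐ x ∂μ, Tendsto (fun n => b n x) atTop (𝓝 (c x))) :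
    ∃ k : ℕ → ℕ, ∀ᵐ x ∂μ, Tendsto (fun n => a n (k n) x) atTop (𝓝 (c x)) := by
  have hε (n : ℕ) : (0 : ℝ≥0∞) < 2⁻¹ ^ n := ENNReal.pow_pos (by norm_num) n
  have hk (n : ℕ) : ∃ k, μ {x | 2⁻¹ ^ n ≤ edist (a n k x) (b n x)} ≤ 2⁻¹ ^ n :=
    ((tendstoInMeasure_of_tendsto_ae (ha_meas n) (ha n) _ (hε n)).eventually_lt_const
      (hε n)).exists.imp fun _ => le_of_lt
  choose k hk using hk
  have hsum : ∑' n, μ {x | 2⁻¹ ^ n ≤ edist (a n (k n) x) (b n x)} ≠ ∞ :=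
    ne_top_of_le_ne_top (by simp [ENNReal.tsum_geometric]) (ENNReal.tsum_le_tsum hk)
  refine ⟨k, ?_⟩
  filter_upwards [ae_eventually_notMem hsum, hb] with x hx hbx
  rw [tendsto_iff_edist_tendsto_0] at hbx ⊢
  have hab : Tendsto (fun n => edist (a n (k n) x) (b n x)) atTop (𝓝 0) :=
    tendsto_of_tendsto_of_tendsto_of_le_of_le' tendsto_const_nhds
      (ENNReal.tendsto_pow_atTop_nhds_zero_of_lt_one (by norm_num)) (.of_forall fun _ => zero_le)
      (hx.mono fun n hn => (not_le.1 hn).le)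
  have hac := hab.add hbx
  rw [add_zero] at hac
  exact tendsto_of_tendsto_of_tendsto_of_le_of_le tendsto_const_nhds hac
    (fun _ => zero_le) (fun n => edist_triangle _ (b n x) _)

section RepresentedIn

variable {m0 : MeasurableSpace Ω} {μ : Measure Ω} {X : Submodule ℝ (Ω →ₘ[μ] ℝ)}

theorem IsIdealL0.mem_of_ae_abs_le (hX : IsIdealL0 X) {u v : Ω →ₘ[μ] ℝ} (hv : v ∈ X)
    (h : ∀ᵐ ω ∂μ, |u ω| ≤ |v ω|) : u ∈ X := by
  refine hX u v (AEEqFun.coeFn_le.mp ?_) hv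
  filter_upwards [AEEqFun.coeFn_abs u, AEEqFun.coeFn_abs v, h] with ω hu hv h
  simpa [hu, hv] using h

theorem IsIdealL0.abs_mem (hX : IsIdealL0 X) {v : Ω →ₘ[μ] ℝ} (hv : v ∈ X) : |v| ∈ X :=
  hX.mem_of_ae_abs_le hv <| by
    filter_upwards [AEEqFun.coeFn_abs v] with ω h
    rw [h, abs_abs]

def RepresentedIn (Z : Submodule ℝ X) (F : Ω → ℝ) : Prop :=
  ∃ x ∈ Z, ((x : Ω →ₘ[μ] ℝ) : Ω → ℝ) =ᵐ[μ] F

variable {Z : Submodule ℝ X} {F G : Ω → ℝ}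

theorem RepresentedIn.mem {x : X} (h : RepresentedIn Z ((x : Ω →ₘ[μ] ℝ) : Ω → ℝ)) : x ∈ Z := by
  obtain ⟨y, hy, hyx⟩ := h
  rwa [← Subtype.ext (AEEqFun.ext hyx)]

theorem RepresentedIn.congr (h : RepresentedIn Z F) (hFG : F =ᵐ[μ] G) : RepresentedIn Z G :=
  let ⟨x, hx, hxF⟩ := h
  ⟨x, hx, hxF.trans hFG⟩

theorem representedIn_zero : RepresentedIn Z (0 : Ω → ℝ) :=
  ⟨0, Z.zero_mem, AEEqFun.coeFn_zero⟩

theorem RepresentedIn.add (hF : RepresentedIn Z F) (hG : RepresentedIn Z G) :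
    RepresentedIn Z (F + G) := by
  obtain ⟨x, hx, hxF⟩ := hF
  obtain ⟨y, hy, hyG⟩ := hG
  exact ⟨x + y, Z.add_mem hx hy, (AEEqFun.coeFn_add _ _).trans (hxF.add hyG)⟩

theorem RepresentedIn.const_smul (c : ℝ) (hF : RepresentedIn Z F) :
    RepresentedIn Z (c • F) := by
  obtain ⟨x, hx, hxF⟩ := hF
  exact ⟨c • x, Z.smul_mem c hx, (AEEqFun.coeFn_smul _ _).trans (hxF.const_smul c)⟩

theorem RepresentedIn.sub (hF : RepresentedIn Z F) (hG : RepresentedIn Z G) :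
    RepresentedIn Z (F - G) := by
  simpa [sub_eq_add_neg] using hF.add (hG.const_smul (-1))

theorem RepresentedIn.finset_sum {ι : Type*} {s : Finset ι} {F : ι → Ω → ℝ}
    (hF : ∀ i ∈ s, RepresentedIn Z (F i)) : RepresentedIn Z (∑ i ∈ s, F i) :=
  Finset.sum_induction F (RepresentedIn Z) (fun _ _ => .add) representedIn_zero hF

end RepresentedIn

section DominatedAEClosed

variable {m0 : MeasurableSpace Ω} {μ : Measure Ω}

def DominatedAEClosed (X : Submodule ℝ (Ω →ₘ[μ] ℝ)) (C : Set X) : Prop :=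
  ∀ ⦃y : ℕ → X⦄ ⦃x : X⦄ ⦃w : Ω →ₘ[μ] ℝ⦄, w ∈ X → (∀ n, y n ∈ C) →
    (∀ n, |(y n : Ω →ₘ[μ] ℝ) - x| ≤ w) →
    (∀ᵐ ω ∂μ, Tendsto (fun n => (y n : Ω →ₘ[μ] ℝ) ω) atTop (𝓝 ((x : Ω →ₘ[μ] ℝ) ω))) → x ∈ C

variable {X : Submodule ℝ (Ω →ₘ[μ] ℝ)} {Z : Submodule ℝ X}

theorem RepresentedIn.of_ae_tendsto (hX : IsIdealL0 X) (hZ : DominatedAEClosed X Z)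
    {F : ℕ → Ω → ℝ} {G : Ω → ℝ} (hF : ∀ n, RepresentedIn Z (F n))
    (hG : AEStronglyMeasurable G μ) {w : Ω →ₘ[μ] ℝ} (hw : w ∈ X)
    (hFw : ∀ n, ∀ᵐ ω ∂μ, |F n ω| ≤ w ω) (hGw : ∀ᵐ ω ∂μ, |G ω| ≤ w ω)
    (hlim : ∀ᵐ ω ∂μ, Tendsto (fun n => F n ω) atTop (𝓝 (G ω))) : RepresentedIn Z G := by
  choose y hyZ hyF using hF
  have hGX : AEEqFun.mk G hG ∈ X := hX.mem_of_ae_abs_le hw <| by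
    filter_upwards [AEEqFun.coeFn_mk G hG, hGw] with ω h h'
    exact h ▸ h'.trans (le_abs_self _)
  refine ⟨⟨_, hGX⟩, hZ (X.add_mem hw hw) hyZ (fun n => AEEqFun.coeFn_le.mp ?_) ?_,
    AEEqFun.coeFn_mk G hG⟩
  · filter_upwards [AEEqFun.coeFn_abs ((y n : Ω →ₘ[μ] ℝ) - AEEqFun.mk G hG),
      AEEqFun.coeFn_sub (y n : Ω →ₘ[μ] ℝ) (AEEqFun.mk G hG), AEEqFun.coeFn_add w w,
      AEEqFun.coeFn_mk G hG, hyF n, hFw n, hGw] with ω h₁ h₂ h₃ h₄ h₅ h₆ h₇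
    simp only [h₁, h₂, h₃, h₄, h₅, Pi.sub_apply, Pi.add_apply]
    exact (abs_sub _ _).trans (add_le_add h₆ h₇)
  · filter_upwards [ae_all_iff.mpr hyF, AEEqFun.coeFn_mk G hG, hlim] with ω h₁ h₂ h₃
    simpa [h₁, h₂] using h₃

theorem RepresentedIn.of_tendsto_of_abs_le (hX : IsIdealL0 X)
    (hconst : ∀ c : ℝ, AEEqFun.const Ω (β := ℝ) c ∈ X) (hZ : DominatedAEClosed X Z)
    {F : ℕ → Ω → ℝ} {G : Ω → ℝ} (hF : ∀ n, RepresentedIn Z (F n)) (hG : Measurable G) {C : ℝ}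
    (hFC : ∀ n ω, |F n ω| ≤ C) (hGC : ∀ ω, |G ω| ≤ C)
    (hlim : ∀ ω, Tendsto (fun n => F n ω) atTop (𝓝 (G ω))) : RepresentedIn Z G := by
  have hC : ∀ᵐ ω ∂μ, AEEqFun.const Ω (β := ℝ) C ω = C := AEEqFun.coeFn_const Ω C
  refine .of_ae_tendsto hX hZ hF hG.aestronglyMeasurable (hconst C) (fun n => ?_) ?_
    (.of_forall hlim)
  · filter_upwards [hC] with ω h
    exact h.symm ▸ hFC n ω
  · filter_upwards [hC] with ω h
    exact h.symm ▸ hGC ω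

end DominatedAEClosed

section Options

variable {m0 : MeasurableSpace Ω} {μ : Measure Ω}

theorem coeFn_call (f : Ω →ₘ[μ] ℝ) (k : ℝ) :
    ⇑((f - k • (1 : Ω →ₘ[μ] ℝ)) ⊔ 0) =ᵐ[μ] fun ω => max (f ω - k) 0 := by
  filter_upwards [AEEqFun.coeFn_sup (f - k • (1 : Ω →ₘ[μ] ℝ)) 0,
    AEEqFun.coeFn_sub f (k • (1 : Ω →ₘ[μ] ℝ)), AEEqFun.coeFn_smul k (1 : Ω →ₘ[μ] ℝ),
    AEEqFun.coeFn_zero (β := ℝ) (μ := μ), AEEqFun.coeFn_one (β := ℝ) (μ := μ)]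
    with ω h₁ h₂ h₃ h₄ h₅
  simp [h₁, h₂, h₃, h₄, h₅]

theorem one_mem_optionSpace (f : Ω →ₘ[μ] ℝ) : 1 ∈ optionSpace f :=
  Submodule.subset_span (Or.inl rfl)

theorem call_mem_optionSpace (f : Ω →ₘ[μ] ℝ) (k : ℝ) :
    (f - k • (1 : Ω →ₘ[μ] ℝ)) ⊔ 0 ∈ optionSpace f :=
  Submodule.subset_span (Or.inr ⟨k, rfl⟩)

def GeneratesUpToNull (μ : Measure Ω) (F : Ω → ℝ) : Prop :=
  ∀ A : Set Ω, MeasurableSet A →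
    ∃ B : Set Ω, MeasurableSet[MeasurableSpace.comap F (inferInstance : MeasurableSpace ℝ)] B ∧
      μ (symmDiff A B) = 0

variable {X : Submodule ℝ (Ω →ₘ[μ] ℝ)}

theorem IsIdealL0.call_mem (hX : IsIdealL0 X)
    (hconst : ∀ c : ℝ, AEEqFun.const Ω (β := ℝ) c ∈ X) {f : Ω →ₘ[μ] ℝ} (hf : f ∈ X) (k : ℝ) :
    (f - k • (1 : Ω →ₘ[μ] ℝ)) ⊔ 0 ∈ X :=
  hX.mem_of_ae_abs_le (X.add_mem (hX.abs_mem hf) (hconst |k|)) <| by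
    filter_upwards [coeFn_call f k, AEEqFun.coeFn_add |f| (AEEqFun.const Ω |k|),
      AEEqFun.coeFn_abs f, AEEqFun.coeFn_const Ω (μ := μ) |k|] with ω h₁ h₂ h₃ h₄
    rw [h₁, h₂, Pi.add_apply, h₃, h₄, Function.const_apply,
      abs_of_nonneg (le_max_right _ _), abs_of_nonneg (by positivity)]
    exact max_le (by linarith [le_abs_self (f ω), neg_abs_le k]) (by positivity)

variable {Z : Submodule ℝ X} {f : X}

theorem representedIn_one (hconst : ∀ c : ℝ, AEEqFun.const Ω (β := ℝ) c ∈ X)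
    (hO : (optionSpace (f : Ω →ₘ[μ] ℝ)).comap X.subtype ≤ Z) : RepresentedIn Z 1 := by
  have h1X : (1 : Ω →ₘ[μ] ℝ) ∈ X := hconst 1
  exact ⟨⟨1, h1X⟩, hO (one_mem_optionSpace _), AEEqFun.coeFn_one⟩

theorem representedIn_call (hX : IsIdealL0 X)
    (hconst : ∀ c : ℝ, AEEqFun.const Ω (β := ℝ) c ∈ X)
    (hO : (optionSpace (f : Ω →ₘ[μ] ℝ)).comap X.subtype ≤ Z) (k : ℝ) :
    RepresentedIn Z fun ω => max ((f : Ω →ₘ[μ] ℝ) ω - k) 0 :=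
  ⟨⟨_, hX.call_mem hconst f.2 k⟩, hO (call_mem_optionSpace _ k), coeFn_call _ k⟩

theorem representedIn_indicator_preimage_Ioi (hX : IsIdealL0 X)
    (hconst : ∀ c : ℝ, AEEqFun.const Ω (β := ℝ) c ∈ X) (hZ : DominatedAEClosed X Z)
    (hO : (optionSpace (f : Ω →ₘ[μ] ℝ)).comap X.subtype ≤ Z) (k : ℝ) :
    RepresentedIn Z ((⇑(f : Ω →ₘ[μ] ℝ) ⁻¹' Ioi k).indicator 1) := by
  set F : Ω → ℝ := ⇑(f : Ω →ₘ[μ] ℝ)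
  have hcall := representedIn_call hX hconst hO
  have hspread (n : ℕ) : RepresentedIn Z fun ω => min ((n + 1) * max (F ω - k) 0) 1 := by
    have hc : (0 : ℝ) < n + 1 := by positivity
    convert ((hcall k).const_smul (n + 1 : ℝ)).sub ((hcall (k + (n + 1 : ℝ)⁻¹)).const_smul
      (n + 1 : ℝ)) using 1
    ext ω
    exact (mul_max_sub_sub_mul_max_sub _ _ hc).symm
  refine .of_tendsto_of_abs_le hX hconst hZ hspread
    (measurable_one.indicator ((f : Ω →ₘ[μ] ℝ).measurable measurableSet_Ioi)) (C := 1)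
    (fun n ω => ?_) (abs_indicator_one_le _) (fun ω => tendsto_min_mul_max_indicator (F ω) k)
  have : 0 ≤ min ((n + 1 : ℝ) * max (F ω - k) 0) 1 := by positivity
  exact abs_le.2 ⟨by linarith, min_le_right _ _⟩

theorem representedIn_indicator_preimage (hX : IsIdealL0 X)
    (hconst : ∀ c : ℝ, AEEqFun.const Ω (β := ℝ) c ∈ X) (hZ : DominatedAEClosed X Z)
    (hO : (optionSpace (f : Ω →ₘ[μ] ℝ)).comap X.subtype ≤ Z) {s : Set ℝ}
    (hs : MeasurableSet s) : RepresentedIn Z ((⇑(f : Ω →ₘ[μ] ℝ) ⁻¹' s).indicator 1) := by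
  set F : Ω → ℝ := ⇑(f : Ω →ₘ[μ] ℝ)
  have hF : Measurable F := (f : Ω →ₘ[μ] ℝ).measurable
  induction s, hs using MeasurableSpace.induction_on_inter
    (BorelSpace.measurable_eq.trans (borel_eq_generateFrom_Ioi ℝ)) isPiSystem_Ioi with
  | empty =>
    rw [preimage_empty, indicator_empty]
    exact representedIn_zero
  | basic _ hIoi =>
    obtain ⟨k, rfl⟩ := hIoi
    exact representedIn_indicator_preimage_Ioi hX hconst hZ hO k
  | compl s _ hs =>
    rw [preimage_compl, indicator_compl]
    exact (representedIn_one hconst hO).sub hs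
  | iUnion g hdisj hgm hg =>
    have hdisj' (n : ℕ) : (↑(Finset.range n) : Set ℕ).PairwiseDisjoint (F ⁻¹' g ·) :=
      fun i _ j _ hij => (hdisj hij).preimage F
    refine .of_tendsto_of_abs_le hX hconst hZ
      (F := fun n => (⋃ i ∈ Finset.range n, F ⁻¹' g i).indicator 1) (fun n => ?_)
      (measurable_one.indicator (hF (.iUnion hgm))) (C := 1)
      (fun n => abs_indicator_one_le _) (abs_indicator_one_le _) (fun ω => ?_)
    · rw [Finset.indicator_biUnion _ _ (hdisj' n), ← Finset.sum_fn]
      exact .finset_sum fun i _ => hg i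
    · rw [preimage_iUnion]
      exact ((tendsto_indicator_biUnion_finset _ _ ω).comp tendsto_finset_range).mono_right
        (pure_le_nhds _)

theorem representedIn_indicator (hX : IsIdealL0 X)
    (hconst : ∀ c : ℝ, AEEqFun.const Ω (β := ℝ) c ∈ X) (hZ : DominatedAEClosed X Z)
    (hO : (optionSpace (f : Ω →ₘ[μ] ℝ)).comap X.subtype ≤ Z)
    (hgen : GeneratesUpToNull μ (f : Ω →ₘ[μ] ℝ)) {A : Set Ω} (hA : MeasurableSet A) :
    RepresentedIn Z (A.indicator 1) := by
  obtain ⟨_, ⟨s, hs, rfl⟩, hAB⟩ := hgen A hA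
  exact (representedIn_indicator_preimage hX hconst hZ hO hs).congr
    (indicator_ae_eq_of_ae_eq_set (measure_symmDiff_eq_zero_iff.1 hAB).symm)

theorem representedIn_simpleFunc (hX : IsIdealL0 X)
    (hconst : ∀ c : ℝ, AEEqFun.const Ω (β := ℝ) c ∈ X) (hZ : DominatedAEClosed X Z)
    (hO : (optionSpace (f : Ω →ₘ[μ] ℝ)).comap X.subtype ≤ Z)
    (hgen : GeneratesUpToNull μ (f : Ω →ₘ[μ] ℝ)) (s : SimpleFunc Ω ℝ) : RepresentedIn Z s := by
  induction s using SimpleFunc.induction with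
  | @const c A hA =>
    convert (representedIn_indicator hX hconst hZ hO hgen hA).const_smul c using 1
    ext ω
    by_cases h : ω ∈ A <;> simp [h]
  | add _ hF hG => exact hF.add hG

theorem DominatedAEClosed.eq_top (hZ : DominatedAEClosed X Z) (hX : IsIdealL0 X)
    (hconst : ∀ c : ℝ, AEEqFun.const Ω (β := ℝ) c ∈ X)
    (hO : (optionSpace (f : Ω →ₘ[μ] ℝ)).comap X.subtype ≤ Z)
    (hgen : GeneratesUpToNull μ (f : Ω →ₘ[μ] ℝ)) : Z = ⊤ := by
  refine eq_top_iff.2 fun x _ => RepresentedIn.mem ?_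
  set G : Ω → ℝ := ⇑(x : Ω →ₘ[μ] ℝ)
  have hG : Measurable G := (x : Ω →ₘ[μ] ℝ).measurable
  set w : Ω →ₘ[μ] ℝ := |(x : Ω →ₘ[μ] ℝ)| + |(x : Ω →ₘ[μ] ℝ)|
  have hw : ∀ᵐ ω ∂μ, w ω = |G ω| + |G ω| := by
    filter_upwards [AEEqFun.coeFn_add |(x : Ω →ₘ[μ] ℝ)| |(x : Ω →ₘ[μ] ℝ)|,
      AEEqFun.coeFn_abs (x : Ω →ₘ[μ] ℝ)] with ω h₁ h₂
    simp [w, h₁, h₂, G]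
  refine .of_ae_tendsto hX hZ (fun n => representedIn_simpleFunc hX hconst hZ hO hgen
      (SimpleFunc.approxOn G hG univ 0 (mem_univ 0) n)) hG.aestronglyMeasurable
    (X.add_mem (hX.abs_mem x.2) (hX.abs_mem x.2)) (fun n => ?_) ?_ (.of_forall fun ω => ?_)
  · filter_upwards [hw] with ω h
    rw [h]
    simpa using SimpleFunc.norm_approxOn_zero_le hG (mem_univ 0) ω n
  · filter_upwards [hw] with ω h
    rw [h]
    linarith [abs_nonneg (G ω)]
  · exact SimpleFunc.tendsto_approxOn hG (mem_univ 0) (by simp)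

end Options

section AESeqClosure

variable {m0 : MeasurableSpace Ω} {μ : Measure Ω} {X : Submodule ℝ (Ω →ₘ[μ] ℝ)}

def aeSeqClosure (S : Submodule ℝ X) : Submodule ℝ X where
  carrier := {x | ∃ g : ℕ → X, (∀ n, g n ∈ S) ∧
    ∀ᵐ ω ∂μ, Tendsto (fun n => (g n : Ω →ₘ[μ] ℝ) ω) atTop (𝓝 ((x : Ω →ₘ[μ] ℝ) ω))}
  zero_mem' := ⟨0, fun _ => S.zero_mem, by
    filter_upwards [AEEqFun.coeFn_zero (β := ℝ) (μ := μ)] with ω h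
    simp [h]⟩
  add_mem' := by
    rintro x y ⟨g, hgS, hg⟩ ⟨h, hhS, hh⟩
    refine ⟨g + h, fun n => S.add_mem (hgS n) (hhS n), ?_⟩
    filter_upwards [hg, hh, ae_all_iff.2 fun n => AEEqFun.coeFn_add (g n : Ω →ₘ[μ] ℝ) (h n),
      AEEqFun.coeFn_add (x : Ω →ₘ[μ] ℝ) y] with ω hgω hhω hadd hxy
    simpa [hadd, hxy] using hgω.add hhω
  smul_mem' := by
    rintro c x ⟨g, hgS, hg⟩
    refine ⟨c • g, fun n => S.smul_mem c (hgS n), ?_⟩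
    filter_upwards [hg, ae_all_iff.2 fun n => AEEqFun.coeFn_smul c (g n : Ω →ₘ[μ] ℝ),
      AEEqFun.coeFn_smul c (x : Ω →ₘ[μ] ℝ)] with ω hgω hsmul hcx
    simpa [hsmul, hcx] using hgω.const_mul c

theorem le_aeSeqClosure (S : Submodule ℝ X) : S ≤ aeSeqClosure S :=
  fun x hx => ⟨fun _ => x, fun _ => hx, .of_forall fun _ => tendsto_const_nhds⟩

theorem dominatedAEClosed_aeSeqClosure [IsFiniteMeasure μ] (S : Submodule ℝ X) :
    DominatedAEClosed X (aeSeqClosure S) := by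
  intro y x _ _ hyS _ hlim
  choose g hgS hg using hyS
  obtain ⟨k, hk⟩ := exists_tendsto_ae_diagonal
    (fun n k => (g n k : Ω →ₘ[μ] ℝ).aestronglyMeasurable) hg hlim
  exact ⟨fun n => g n (k n), fun n => hgS n _, hk⟩

end AESeqClosure

section WeakTopology

variable {m0 : MeasurableSpace Ω} {μ : Measure Ω} {X : Submodule ℝ (Ω →ₘ[μ] ℝ)}

theorem tendsto_weakOCTopology_iff {ι : Type*} {l : Filter ι} {y : ι → X} {x : X} :
    Tendsto y l (@nhds _ (weakOCTopology X) x) ↔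
      ∀ φ : X →ₗ[ℝ] ℝ, OrderContinuousOn X φ → Tendsto (fun i => φ (y i)) l (𝓝 (φ x)) := by
  unfold weakOCTopology
  simp only [nhds_iInf, nhds_induced, tendsto_iInf, tendsto_comap_iff]
  rfl

theorem isTopologicalAddGroup_weakOCTopology :
    @IsTopologicalAddGroup X (weakOCTopology X) _ :=
  topologicalAddGroup_iInf fun φ => topologicalAddGroup_iInf fun _ => topologicalAddGroup_induced φ

theorem continuousSMul_weakOCTopology : @ContinuousSMul ℝ X _ _ (weakOCTopology X) :=
  continuousSMul_iInf fun φ => continuousSMul_iInf fun _ => continuousSMul_induced φ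

end WeakTopology

section OrderConvergence

-- Truncating at `W` keeps the family bounded: an unbounded `⨆` of reals is the junk value `0`.
noncomputable def truncatedTailSup (a : ℕ → ℝ) (W : ℝ) (n : ℕ) : ℝ :=
  ⨆ m, min |a (n + m)| W

variable {a : ℕ → ℝ} {W : ℝ}

theorem bddAbove_range_min_abs (a : ℕ → ℝ) (W : ℝ) (n : ℕ) :
    BddAbove (range fun m => min |a (n + m)| W) :=
  ⟨W, by rintro _ ⟨m, rfl⟩; exact min_le_right _ _⟩

theorem truncatedTailSup_le (n : ℕ) : truncatedTailSup a W n ≤ W :=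
  ciSup_le fun _ => min_le_right _ _

theorem abs_le_truncatedTailSup {n : ℕ} (h : |a n| ≤ W) : |a n| ≤ truncatedTailSup a W n :=
  le_ciSup_of_le (bddAbove_range_min_abs a W n) 0 (by simpa using h)

theorem antitone_truncatedTailSup : Antitone (truncatedTailSup a W) := fun n n' h =>
  ciSup_le fun m => le_ciSup_of_le (bddAbove_range_min_abs a W n) (m + (n' - n)) <| by
    rw [show n + (m + (n' - n)) = n' + m by omega]

theorem tendsto_truncatedTailSup (ha : Tendsto a atTop (𝓝 0)) (hW : ∀ n, |a n| ≤ W) :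
    Tendsto (truncatedTailSup a W) atTop (𝓝 0) := by
  have ha' : Tendsto (fun n => |a n|) atTop (𝓝 0) := by simpa using ha.abs
  refine tendsto_order.2 ⟨fun b hb => .of_forall fun n =>
    hb.trans_le ((abs_nonneg _).trans (abs_le_truncatedTailSup (hW n))), fun b hb => ?_⟩
  obtain ⟨N, hN⟩ := eventually_atTop.1 (ha'.eventually (gt_mem_nhds (half_pos hb)))
  refine eventually_atTop.2 ⟨N, fun n hn => (ciSup_le fun m => ?_).trans_lt (half_lt_self hb)⟩
  exact (min_le_left _ _).trans (hN (n + m) (by omega)).le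

variable {m0 : MeasurableSpace Ω} {μ : Measure Ω}

theorem exists_antitone_majorant {y : ℕ → Ω →ₘ[μ] ℝ} {w : Ω →ₘ[μ] ℝ} (hdom : ∀ n, |y n| ≤ w)
    (hlim : ∀ᵐ ω ∂μ, Tendsto (fun n => y n ω) atTop (𝓝 0)) :
    ∃ z : ℕ → Ω →ₘ[μ] ℝ, Antitone z ∧ (∀ n, |y n| ≤ z n) ∧ (∀ n, 0 ≤ z n) ∧ (∀ n, z n ≤ w) ∧
      ∀ᵐ ω ∂μ, Tendsto (fun n => z n ω) atTop (𝓝 0) := by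
  set Z : ℕ → Ω → ℝ := fun n ω => truncatedTailSup (fun m => y m ω) (w ω) n
  have hZmeas (n : ℕ) : Measurable (Z n) :=
    .iSup fun m => ((y (n + m)).measurable.abs).min w.measurable
  set z : ℕ → Ω →ₘ[μ] ℝ := fun n => AEEqFun.mk (Z n) (hZmeas n).aestronglyMeasurable
  have hz : ∀ᵐ ω ∂μ, ∀ n, z n ω = Z n ω := ae_all_iff.2 fun n => AEEqFun.coeFn_mk _ _
  have hdom' : ∀ᵐ ω ∂μ, ∀ n, |y n ω| ≤ w ω := ae_all_iff.2 fun n => by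
    filter_upwards [AEEqFun.coeFn_le.2 (hdom n), AEEqFun.coeFn_abs (y n)] with ω h habs
    rwa [habs] at h
  have hyz (n : ℕ) : ∀ᵐ ω ∂μ, |y n ω| ≤ z n ω := by
    filter_upwards [hz, hdom'] with ω hzω hd
    exact hzω n ▸ abs_le_truncatedTailSup (a := fun m => y m ω) (hd n)
  refine ⟨z, fun n n' h => AEEqFun.coeFn_le.1 ?_, fun n => AEEqFun.coeFn_le.1 ?_,
    fun n => AEEqFun.coeFn_le.1 ?_, fun n => AEEqFun.coeFn_le.1 ?_, ?_⟩
  · filter_upwards [hz] with ω hzω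
    simpa only [hzω] using antitone_truncatedTailSup h
  · filter_upwards [hyz n, AEEqFun.coeFn_abs (y n)] with ω h habs
    rwa [habs]
  · filter_upwards [hyz n, AEEqFun.coeFn_zero (β := ℝ) (μ := μ)] with ω h h0
    exact h0 ▸ (abs_nonneg _).trans h
  · filter_upwards [hz] with ω hzω
    exact hzω n ▸ truncatedTailSup_le n
  · filter_upwards [hz, hdom', hlim] with ω hzω hd hy
    simpa only [hzω] using tendsto_truncatedTailSup hy hd

variable {X : Submodule ℝ (Ω →ₘ[μ] ℝ)}

theorem orderConvNetIn_zero_of_ae_tendsto (hX : IsIdealL0 X) {y : ℕ → Ω →ₘ[μ] ℝ}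
    {w : Ω →ₘ[μ] ℝ} (hw : w ∈ X) (hdom : ∀ n, |y n| ≤ w)
    (hlim : ∀ᵐ ω ∂μ, Tendsto (fun n => y n ω) atTop (𝓝 0)) :
    OrderConvNetIn X (fun a : ULift.{u} ℕ => y a.down) 0 := by
  obtain ⟨z, hanti, hyz, hz0, hzw, hz⟩ := exists_antitone_majorant hdom hlim
  have hzX (n : ℕ) : z n ∈ X := hX.mem_of_ae_abs_le hw <| by
    filter_upwards [AEEqFun.coeFn_le.2 (hz0 n), AEEqFun.coeFn_le.2 (hzw n),
      AEEqFun.coeFn_zero (β := ℝ) (μ := μ)] with ω h0 hw h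
    rw [h] at h0
    exact abs_le_abs_of_nonneg h0 hw
  refine ⟨fun a => z a.down, fun a => hzX _,
    fun a b hab => hanti hab, fun a => hz0 _, fun h _ hh => AEEqFun.coeFn_le.1 ?_,
    .of_forall fun a => by simpa using hyz a.down⟩
  filter_upwards [hz, ae_all_iff.2 fun n => AEEqFun.coeFn_le.2 (hh ⟨n⟩),
    AEEqFun.coeFn_zero (β := ℝ) (μ := μ)] with ω hzω hhω h0
  rw [h0]
  exact ge_of_tendsto' hzω hhω

theorem OrderContinuousOn.tendsto_of_ae_tendsto (hX : IsIdealL0 X) {φ : X →ₗ[ℝ] ℝ}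
    (hφ : OrderContinuousOn X φ) {y : ℕ → X} {x : X} {w : Ω →ₘ[μ] ℝ} (hw : w ∈ X)
    (hdom : ∀ n, |(y n : Ω →ₘ[μ] ℝ) - x| ≤ w)
    (hlim : ∀ᵐ ω ∂μ, Tendsto (fun n => (y n : Ω →ₘ[μ] ℝ) ω) atTop (𝓝 ((x : Ω →ₘ[μ] ℝ) ω))) :
    Tendsto (fun n => φ (y n)) atTop (𝓝 (φ x)) := by
  have hconv := orderConvNetIn_zero_of_ae_tendsto.{u} hX hw hdom <| by
    filter_upwards [hlim, ae_all_iff.2 fun n => AEEqFun.coeFn_sub (y n : Ω →ₘ[μ] ℝ) x]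
      with ω hω hsub
    simpa [hsub] using hω.sub_const ((x : Ω →ₘ[μ] ℝ) ω)
  have hup : Tendsto (ULift.up.{u} : ℕ → ULift.{u} ℕ) atTop atTop :=
    tendsto_atTop_atTop.2 fun b => ⟨b.down, fun _ => id⟩
  have := (hφ (ULift.{u} ℕ) _ inferInstance ⟨⟨0⟩⟩ (fun a => y a.down - x) hconv).comp hup
  simpa [Function.comp_def] using this.add_const (φ x)

theorem IsClosed.dominatedAEClosed (hX : IsIdealL0 X) {C : Set X}
    (hC : IsClosed[weakOCTopology X] C) : DominatedAEClosed X C := by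
  let := weakOCTopology X
  exact fun _ _ _ hw hyC hdom hlim => hC.mem_of_tendsto
    (tendsto_weakOCTopology_iff.2 fun _ hφ => hφ.tendsto_of_ae_tendsto hX hw hdom hlim)
    (.of_forall hyC)

end OrderConvergence

theorem options_complete_market_general
    {m0 : MeasurableSpace Ω} {μ : Measure Ω} [IsProbabilityMeasure μ]
    (X : Submodule ℝ (Ω →ₘ[μ] ℝ)) (hX : IsIdealL0 X)
    (hconst : ∀ c : ℝ, AEEqFun.const Ω (β := ℝ) c ∈ X)
    (f : ↥X)
    (hgen : ∀ A : Set Ω, MeasurableSet A →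
      ∃ B : Set Ω, MeasurableSet[MeasurableSpace.comap (⇑(f : Ω →ₘ[μ] ℝ))
        (inferInstance : MeasurableSpace ℝ)] B ∧ μ (symmDiff A B) = 0) :
    (∀ g : ↥X, ∃ gn : ℕ → ↥X,
      (∀ n, (gn n : Ω →ₘ[μ] ℝ) ∈ optionSpace (f : Ω →ₘ[μ] ℝ)) ∧
      ∀ᵐ ω ∂μ, Tendsto (fun n => (gn n : Ω →ₘ[μ] ℝ) ω) atTop
        (nhds ((g : Ω →ₘ[μ] ℝ) ω))) ∧
    @closure _ (weakOCTopology X)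
      {x : ↥X | (x : Ω →ₘ[μ] ℝ) ∈ optionSpace (f : Ω →ₘ[μ] ℝ)} = Set.univ := by
  set S := (optionSpace (f : Ω →ₘ[μ] ℝ)).comap X.subtype
  have hlimits : aeSeqClosure S = ⊤ :=
    (dominatedAEClosed_aeSeqClosure S).eq_top hX hconst (le_aeSeqClosure S) hgen
  let := weakOCTopology X
  have := isTopologicalAddGroup_weakOCTopology (X := X)
  have := continuousSMul_weakOCTopology (X := X)
  have hdense : S.topologicalClosure = ⊤ :=
    (S.isClosed_topologicalClosure.dominatedAEClosed hX).eq_top hX hconst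
      S.le_topologicalClosure hgen
  refine ⟨fun g => (hlimits ▸ Submodule.mem_top : g ∈ aeSeqClosure S), ?_⟩
  change closure (S : Set X) = univ
  rw [← Submodule.topologicalClosure_coe, hdense, Submodule.top_coe]

/-- Corollary 3.2: If `σ(f) = Σ` (up to null sets), then the options on `f`
complete the market: every `g ∈ X` is an a.e. limit of portfolios of options on `f`, and
`O_f` is `σ(X, Xₙ~)`-dense in `X`. -/
theorem options_complete_market
    {m0 : MeasurableSpace Ω} {μ : Measure Ω} [IsProbabilityMeasure μ]
    (X : Submodule ℝ (Ω →ₘ[μ] ℝ)) (hX : IsIdealL0 X)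
    (hconst : ∀ c : ℝ, AEEqFun.const Ω (β := ℝ) c ∈ X)
    (hφ : ∃ φ : ↥X →ₗ[ℝ] ℝ, OrderContinuousOn X ⇑φ ∧ StrictlyPositiveOn X ⇑φ)
    (f : ↥X) (hf : 0 ≤ (f : Ω →ₘ[μ] ℝ))
    (hgen : ∀ A : Set Ω, MeasurableSet A →
      ∃ B : Set Ω, MeasurableSet[MeasurableSpace.comap (⇑(f : Ω →ₘ[μ] ℝ))
        (inferInstance : MeasurableSpace ℝ)] B ∧ μ (symmDiff A B) = 0) :
    (∀ g : ↥X, ∃ gn : ℕ → ↥X,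
      (∀ n, (gn n : Ω →ₘ[μ] ℝ) ∈ optionSpace (f : Ω →ₘ[μ] ℝ)) ∧
      ∀ᵐ ω ∂μ, Tendsto (fun n => (gn n : Ω →ₘ[μ] ℝ) ω) atTop
        (nhds ((g : Ω →ₘ[μ] ℝ) ω))) ∧
    @closure _ (weakOCTopology X)
      {x : ↥X | (x : Ω →ₘ[μ] ℝ) ∈ optionSpace (f : Ω →ₘ[μ] ℝ)} = Set.univ :=
  options_complete_market_general (m0 := m0) X hX hconst f hgen
end

section
/- For 1 ≤ p < ∞, the option space O_f of a nonnegative f ∈ L^p(Ω, Σ, ℙ) satisfies: the L^p-norm closure of O_f equals L⁰(σ(f)) ∩ L^p(Σ); i.e., g ∈ L^p is σ(f)-measurable iff it is a norm limit of portfolios of options on f. -/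
/-!
`O_f` consists of `σ(f)`-measurable functions and `L^p(σ(f))` is closed in `L^p`, which gives
one inclusion. Conversely, the closure `S` of `O_f` is a closed subspace containing `1`. The call
spreads `δ⁻¹ ((f - a)⁺ - (f - a - δ)⁺)` lie in `O_f`, take values in `[0, 1]` and converge
pointwise to `1_{f > a}` as `δ → 0`; since `p < ∞`, dominated convergence puts `1_{f > a}` in
`S`. The sets `{f ∈ t}` with `1_{f ∈ t} ∈ S` form a Dynkin system (complements through `1`,
disjoint unions through continuity of the measure), so by the π-λ theorem all indicators of
`σ(f)`-measurable sets lie in `S`, and these span a dense subspace of `L^p(σ(f))`.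
-/

open MeasureTheory Filter

variable {Ω : Type*}

noncomputable def oneLp {m0 : MeasurableSpace Ω} {μ : Measure Ω} [IsFiniteMeasure μ]
    (p : ENNReal) : Lp ℝ p μ :=
  (memLp_const (1 : ℝ)).toLp fun _ => (1 : ℝ)

/-- The option space `O_f = span{1, (f-k)⁺ : k ∈ ℝ}` inside `L^p`. -/
noncomputable def optionSpaceLp {m0 : MeasurableSpace Ω} {μ : Measure Ω}
    [IsFiniteMeasure μ] {p : ENNReal} [Fact (1 ≤ p)] (f : Lp ℝ p μ) :
    Submodule ℝ (Lp ℝ p μ) :=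
  Submodule.span ℝ ({oneLp p} ∪ {g | ∃ k : ℝ, g = (f - k • oneLp p) ⊔ 0})

open scoped ENNReal Topology
open Set

namespace MeasureTheory

variable {m0 : MeasurableSpace Ω} {μ : Measure Ω} {p : ℝ≥0∞}

theorem smul_indicatorConstLp_one {s : Set Ω} (hs : MeasurableSet s) (hμs : μ s ≠ ∞) (c : ℝ) :
    c • indicatorConstLp p hs hμs (1 : ℝ) = indicatorConstLp p hs hμs c := by
  ext1
  filter_upwards [Lp.coeFn_smul c (indicatorConstLp p hs hμs (1 : ℝ)),
    indicatorConstLp_coeFn (p := p) (hs := hs) (hμs := hμs) (c := (1 : ℝ)),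
    indicatorConstLp_coeFn (p := p) (hs := hs) (hμs := hμs) (c := c)] with ω h1 h2 h3
  rw [h1, h3, Pi.smul_apply, h2]
  by_cases hω : ω ∈ s <;> simp [hω]

theorem mem_of_aestronglyMeasurable_of_indicatorConstLp_mem [Fact (1 ≤ p)] (hp : p ≠ ∞)
    {m : MeasurableSpace Ω} (hm : m ≤ m0) {S : Submodule ℝ (Lp ℝ p μ)}
    (hS : IsClosed (S : Set (Lp ℝ p μ)))
    (h_ind : ∀ s (hs : MeasurableSet[m] s) (hμs : μ s ≠ ∞),
      indicatorConstLp p (hm s hs) hμs (1 : ℝ) ∈ S)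
    {g : Lp ℝ p μ} (hg : AEStronglyMeasurable[m] g μ) : g ∈ S := by
  refine Lp.induction_stronglyMeasurable hm hp (· ∈ S) (fun c s hs hμs => ?_)
    (fun _ _ _ _ _ _ _ hPf hPg => S.add_mem hPf hPg) (hS.preimage continuous_subtype_val) g hg
  have h := S.smul_mem c (h_ind s hs hμs.ne)
  rwa [smul_indicatorConstLp_one] at h

section FiniteMeasure

variable [IsFiniteMeasure μ] {E : Type*} [NormedAddCommGroup E]

theorem indicatorConstLp_compl {s : Set Ω} (hs : MeasurableSet s) (c : E) :
    indicatorConstLp p hs.compl (measure_ne_top μ _) c =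
      Lp.const p μ c - indicatorConstLp p hs (measure_ne_top μ _) c := by
  rw [eq_sub_iff_add_eq, add_comm, ← indicatorConstLp_disjoint_union hs hs.compl _ _
    disjoint_compl_right, ← indicatorConstLp_univ]
  congr 1
  exact union_compl_self s

theorem tendsto_indicatorConstLp_iUnion_of_monotone [Fact (1 ≤ p)] (hp : p ≠ ∞) {s : ℕ → Set Ω}
    (hs : ∀ n, MeasurableSet (s n)) (hmono : Monotone s) (c : E) :
    Tendsto (fun n => indicatorConstLp p (hs n) (measure_ne_top μ _) c)
      atTop (𝓝 (indicatorConstLp p (MeasurableSet.iUnion hs) (measure_ne_top μ _) c)) := by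
  refine tendsto_indicatorConstLp_set hp ?_
  simp_rw [symmDiff_of_le (subset_iUnion s _)]
  have hdiff : ∀ n, μ ((⋃ i, s i) \ s n) = μ (⋃ i, s i) - μ (s n) := fun n =>
    measure_sdiff (subset_iUnion s n) (hs n).nullMeasurableSet (measure_ne_top μ _)
  simp_rw [hdiff]
  have := ENNReal.Tendsto.sub (tendsto_const_nhds (x := μ (⋃ i, s i)))
    (tendsto_measure_iUnion_atTop (μ := μ) hmono) (Or.inl (measure_ne_top μ _))
  rwa [tsub_self] at this

theorem indicatorConstLp_mem_of_isPiSystem [Fact (1 ≤ p)] (hp : p ≠ ∞) {m : MeasurableSpace Ω}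
    (hm : m ≤ m0) {C : Set (Set Ω)} (hgen : m = MeasurableSpace.generateFrom C)
    (hC : IsPiSystem C) {S : AddSubgroup (Lp E p μ)} (hS : IsClosed (S : Set (Lp E p μ)))
    {c : E} (h_const : Lp.const p μ c ∈ S)
    (h_basic : ∀ s ∈ C, ∀ hs : MeasurableSet[m0] s,
      indicatorConstLp p hs (measure_ne_top μ s) c ∈ S)
    (s : Set Ω) (hs : MeasurableSet[m] s) :
    indicatorConstLp p (hm s hs) (measure_ne_top μ s) c ∈ S := by
  induction s, hs using MeasurableSpace.induction_on_inter hgen hC with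
  | empty => simp
  | basic t ht => exact h_basic t ht _
  | compl t ht ih =>
    rw [indicatorConstLp_compl (hm t ht)]
    exact S.sub_mem h_const ih
  | iUnion t hdisj ht ih =>
    have ht' : ∀ n, MeasurableSet[m0] (t n) := fun n => hm _ (ht n)
    have hacc : ∀ n, MeasurableSet[m0] (accumulate t n) := fun n =>
      .biUnion (to_countable _) fun i _ => ht' i
    have hmem : ∀ n, indicatorConstLp p (hacc n) (measure_ne_top μ _) c ∈ S := by
      intro n
      induction n with
      | zero => simpa only [accumulate_zero_nat] using ih 0
      | succ n ihn =>
        simp only [accumulate_succ]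
        rw [indicatorConstLp_disjoint_union (hacc n) (ht' _) (measure_ne_top μ _)
          (measure_ne_top μ _) (disjoint_accumulate hdisj n.lt_succ_self)]
        exact S.add_mem ihn (ih _)
    have hlim :=
      tendsto_indicatorConstLp_iUnion_of_monotone (μ := μ) hp hacc monotone_accumulate c
    simp only [iUnion_accumulate] at hlim
    exact hS.mem_of_tendsto hlim (Eventually.of_forall hmem)

theorem Lp.tendsto_of_ae_tendsto_of_norm_le [Fact (1 ≤ p)] (hp : p ≠ ∞) {F : ℕ → Lp E p μ}
    {G : Lp E p μ} {C : ℝ} (hbound : ∀ n, ∀ᵐ ω ∂μ, ‖F n ω‖ ≤ C)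
    (hlim : ∀ᵐ ω ∂μ, Tendsto (fun n => F n ω) atTop (𝓝 (G ω))) :
    Tendsto F atTop (𝓝 G) := by
  rw [Lp.tendsto_Lp_iff_tendsto_eLpNorm']
  have hui : UnifIntegrable (fun n => ⇑(F n)) p μ := by
    refine unifIntegrable_of Fact.out hp (fun n => Lp.aestronglyMeasurable _) fun ε _ =>
      ⟨C.toNNReal + 1, fun n => ?_⟩
    have h_tail : {ω | C.toNNReal + 1 ≤ ‖F n ω‖₊}.indicator (F n) =ᵐ[μ] 0 := by
      filter_upwards [hbound n] with ω hω
      refine indicator_of_notMem (fun h => ?_) _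
      have h' : C.toNNReal + 1 ≤ ‖F n ω‖ := by exact_mod_cast h
      linarith [Real.le_coe_toNNReal C]
    rw [eLpNorm_congr_ae h_tail, eLpNorm_zero]
    exact zero_le
  exact tendsto_Lp_finite_of_tendsto_ae Fact.out hp (fun n => Lp.aestronglyMeasurable _)
    (Lp.memLp G) hui hlim

end FiniteMeasure

end MeasureTheory

noncomputable def callSpread (a δ x : ℝ) : ℝ := δ⁻¹ * ((x - a) ⊔ 0 - (x - (a + δ)) ⊔ 0)

theorem callSpread_mem_Icc (a x : ℝ) {δ : ℝ} (hδ : 0 < δ) : callSpread a δ x ∈ Icc 0 1 := by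
  have h1 : x - (a + δ) ≤ (x - (a + δ)) ⊔ 0 := le_sup_left
  have h2 : (0 : ℝ) ≤ (x - (a + δ)) ⊔ 0 := le_sup_right
  have h3 : (x - a) ⊔ 0 ≤ (x - (a + δ)) ⊔ 0 + δ := sup_le (by linarith) (by linarith)
  have h4 : (x - (a + δ)) ⊔ 0 ≤ (x - a) ⊔ 0 := sup_le_sup_right (by linarith) 0
  exact ⟨mul_nonneg (inv_nonneg.2 hδ.le) (by linarith),
    inv_mul_le_one_of_le₀ (by linarith) hδ.le⟩

theorem callSpread_of_le {a δ x : ℝ} (hδ : 0 ≤ δ) (hx : x ≤ a) : callSpread a δ x = 0 := by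
  simp [callSpread, sup_eq_right.2 (sub_nonpos.2 hx),
    sup_eq_right.2 (sub_nonpos.2 (hx.trans (le_add_of_nonneg_right hδ)))]

theorem callSpread_of_add_le {a δ x : ℝ} (hδ : 0 < δ) (hx : a + δ ≤ x) :
    callSpread a δ x = 1 := by
  rw [callSpread, sup_eq_left.2 (by linarith), sup_eq_left.2 (by linarith)]
  field_simp
  ring

theorem tendsto_callSpread (a x : ℝ) :
    Tendsto (fun δ => callSpread a δ x) (𝓝[>] 0) (𝓝 ((Ioi a).indicator (fun _ => 1) x)) := by
  rcases le_or_gt x a with hx | hx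
  · rw [indicator_of_notMem (notMem_Ioi.2 hx)]
    refine tendsto_const_nhds.congr' ?_
    filter_upwards [self_mem_nhdsWithin] with δ hδ
    exact (callSpread_of_le (le_of_lt hδ) hx).symm
  · rw [indicator_of_mem (mem_Ioi.2 hx)]
    refine tendsto_const_nhds.congr' ?_
    filter_upwards [Ioo_mem_nhdsGT (sub_pos.2 hx)] with δ hδ
    exact (callSpread_of_add_le hδ.1 (by linarith [hδ.2])).symm

section OptionSpace

variable {m0 : MeasurableSpace Ω} {μ : Measure Ω} [IsFiniteMeasure μ] {p : ℝ≥0∞}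

theorem coeFn_oneLp : ⇑(oneLp (μ := μ) p) =ᵐ[μ] fun _ => (1 : ℝ) := MemLp.coeFn_toLp _

noncomputable def callLp (f : Lp ℝ p μ) (k : ℝ) : Lp ℝ p μ := (f - k • oneLp p) ⊔ 0

theorem coeFn_callLp (f : Lp ℝ p μ) (k : ℝ) :
    ⇑(callLp f k) =ᵐ[μ] fun ω => (f ω - k) ⊔ 0 := by
  filter_upwards [Lp.coeFn_sup (f - k • oneLp p) 0, Lp.coeFn_sub f (k • oneLp p),
    Lp.coeFn_smul k (oneLp (μ := μ) p), Lp.coeFn_zero ℝ p μ, coeFn_oneLp (μ := μ) (p := p)]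
    with ω h_sup h_sub h_smul h_zero h_one
  rw [callLp, h_sup, Pi.sup_apply, h_sub, Pi.sub_apply, h_smul, Pi.smul_apply, h_one, h_zero]
  simp

variable [Fact (1 ≤ p)]

theorem oneLp_mem_optionSpaceLp (f : Lp ℝ p μ) : oneLp p ∈ optionSpaceLp f :=
  Submodule.subset_span (Or.inl rfl)

theorem callLp_mem_optionSpaceLp (f : Lp ℝ p μ) (k : ℝ) : callLp f k ∈ optionSpaceLp f :=
  Submodule.subset_span (Or.inr ⟨k, rfl⟩)

theorem optionSpaceLp_le_lpMeas (f : Lp ℝ p μ) :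
    optionSpaceLp f ≤ lpMeas ℝ ℝ (MeasurableSpace.comap f inferInstance) p μ := by
  have hf : Measurable[MeasurableSpace.comap f inferInstance] f := comap_measurable f
  rw [optionSpaceLp, Submodule.span_le]
  rintro _ (rfl | ⟨k, rfl⟩) <;> rw [SetLike.mem_coe, mem_lpMeas_iff_aestronglyMeasurable]
  · exact aestronglyMeasurable_const.congr coeFn_oneLp.symm
  · exact (((hf.sub_const k).max measurable_const).aestronglyMeasurable).congr
      (coeFn_callLp f k).symm

theorem indicatorConstLp_preimage_Ioi_mem_closure_optionSpaceLp (hp : p ≠ ∞)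
    (f : Lp ℝ p μ) (a : ℝ) :
    indicatorConstLp p ((Lp.stronglyMeasurable f).measurable (measurableSet_Ioi (a := a)))
      (measure_ne_top μ _) (1 : ℝ) ∈ (optionSpaceLp f).topologicalClosure := by
  set δ : ℕ → ℝ := fun n => 1 / ((n : ℝ) + 1)
  have hδ_pos : ∀ n, 0 < δ n := fun n => Nat.one_div_pos_of_nat
  have hδ_lim : Tendsto δ atTop (𝓝[>] 0) :=
    tendsto_nhdsWithin_iff.2 ⟨tendsto_one_div_add_atTop_nhds_zero_nat, .of_forall hδ_pos⟩
  set F : ℕ → Lp ℝ p μ := fun n => (δ n)⁻¹ • (callLp f a - callLp f (a + δ n))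
  have hF_mem : ∀ n, F n ∈ optionSpaceLp f := fun n => Submodule.smul_mem _ _
    (Submodule.sub_mem _ (callLp_mem_optionSpaceLp f a) (callLp_mem_optionSpaceLp f _))
  have hF_ae : ∀ᵐ ω ∂μ, ∀ n, F n ω = callSpread a (δ n) (f ω) := by
    refine ae_all_iff.2 fun n => ?_
    filter_upwards [Lp.coeFn_smul (δ n)⁻¹ (callLp f a - callLp f (a + δ n)),
      Lp.coeFn_sub (callLp f a) (callLp f (a + δ n)), coeFn_callLp f a,
      coeFn_callLp f (a + δ n)] with ω h_smul h_sub h_a h_aδ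
    rw [h_smul, Pi.smul_apply, h_sub, Pi.sub_apply, h_a, h_aδ, smul_eq_mul, callSpread]
  refine (optionSpaceLp f).isClosed_topologicalClosure.mem_of_tendsto
    (Lp.tendsto_of_ae_tendsto_of_norm_le hp (C := 1) (fun n => ?_) ?_)
    (.of_forall fun n => Submodule.le_topologicalClosure _ (hF_mem n))
  · filter_upwards [hF_ae] with ω hω
    rw [hω, Real.norm_eq_abs, abs_le]
    have := callSpread_mem_Icc a (f ω) (hδ_pos n)
    exact ⟨by linarith [this.1], this.2⟩
  · filter_upwards [hF_ae, indicatorConstLp_coeFn (p := p) (μ := μ) (c := (1 : ℝ))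
      (hs := (Lp.stronglyMeasurable f).measurable (measurableSet_Ioi (a := a)))
      (hμs := measure_ne_top μ _)] with ω hω h_ind
    simp only [hω, h_ind]
    exact (tendsto_callSpread a (f ω)).comp hδ_lim

theorem indicatorConstLp_mem_closure_optionSpaceLp (hp : p ≠ ∞) (f : Lp ℝ p μ) (s : Set Ω)
    (hs : MeasurableSet[MeasurableSpace.comap f inferInstance] s) :
    indicatorConstLp p ((Lp.stronglyMeasurable f).measurable.comap_le s hs) (measure_ne_top μ s)
      (1 : ℝ) ∈ (optionSpaceLp f).topologicalClosure := by
  have hgen : MeasurableSpace.comap f inferInstance =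
      MeasurableSpace.generateFrom {s | ∃ t ∈ range Ioi, f ⁻¹' t = s} := by
    rw [BorelSpace.measurable_eq (α := ℝ), borel_eq_generateFrom_Ioi,
      MeasurableSpace.comap_generateFrom]
    rfl
  refine indicatorConstLp_mem_of_isPiSystem
    (S := (optionSpaceLp f).topologicalClosure.toAddSubgroup) hp _ hgen
    (isPiSystem_Ioi.comap f) (Submodule.isClosed_topologicalClosure _)
    (Submodule.le_topologicalClosure _ (oneLp_mem_optionSpaceLp f)) ?_ s hs
  rintro _ ⟨_, ⟨a, rfl⟩, rfl⟩ _
  exact indicatorConstLp_preimage_Ioi_mem_closure_optionSpaceLp hp f a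

end OptionSpace

theorem lp_norm_closure_optionSpace_general
    {m0 : MeasurableSpace Ω} {μ : Measure Ω} [IsProbabilityMeasure μ]
    (p : ENNReal) [Fact (1 ≤ p)] (hp : p ≠ ⊤)
    (f : Lp ℝ p μ) :
    closure (optionSpaceLp f : Set (Lp ℝ p μ)) =
      {g : Lp ℝ p μ | ∃ g' : Ω → ℝ,
        Measurable[MeasurableSpace.comap (⇑f) (inferInstance : MeasurableSpace ℝ)] g' ∧
        ⇑g =ᵐ[μ] g'} := by
  have hm := (Lp.stronglyMeasurable f).measurable.comap_le
  apply subset_antisymm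
  · intro g hg
    obtain ⟨g', hg', hgg'⟩ :=
      closure_minimal (optionSpaceLp_le_lpMeas f) (isClosed_aestronglyMeasurable hm) hg
    exact ⟨g', hg'.measurable, hgg'⟩
  · rintro g ⟨g', hg', hgg'⟩
    rw [← Submodule.topologicalClosure_coe]
    exact mem_of_aestronglyMeasurable_of_indicatorConstLp_mem hp hm
      (Submodule.isClosed_topologicalClosure _)
      (fun s hs _ => indicatorConstLp_mem_closure_optionSpaceLp hp f s hs)
      ⟨g', hg'.stronglyMeasurable, hgg'⟩

/-- For `1 ≤ p < ∞` and `0 ≤ f ∈ L^p` over a probability space, the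
`L^p`-norm closure of the option space `O_f` is exactly the set of `σ(f)`-measurable
elements of `L^p`. -/
theorem lp_norm_closure_optionSpace
    {m0 : MeasurableSpace Ω} {μ : Measure Ω} [IsProbabilityMeasure μ]
    (p : ENNReal) [Fact (1 ≤ p)] (hp : p ≠ ⊤)
    (f : Lp ℝ p μ) (hf : 0 ≤ f) :
    closure (optionSpaceLp f : Set (Lp ℝ p μ)) =
      {g : Lp ℝ p μ | ∃ g' : Ω → ℝ,
        Measurable[MeasurableSpace.comap (⇑f) (inferInstance : MeasurableSpace ℝ)] g' ∧
        ⇑g =ᵐ[μ] g'} :=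
  lp_norm_closure_optionSpace_general (m0 := m0) p hp f
end
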